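/- arXiv:2008.06314 — 7 statements merged into one kernel-verified Lean document; each statement's English description precedes it below -/
import Mathlib

section
/- For any two nonzero vectors u, v in a Hilbert space X, the distance from v/‖v‖ to the cone ℝ₊u := {λu : λ ≥ 0} equals the distance from u/‖u‖ to the cone ℝ₊v. -/
open Metric
open scoped InnerProductSpace

variable {X : Type*} [NormedAddCommGroup X] [InnerProductSpace ℝ X] [CompleteSpace X]

/-- The cone `ℝ₊(u) = {λ u : λ ≥ 0}`. -/
def ray (u : X) : Set X := {w | ∃ l : ℝ, 0 ≤ l ∧ w = l • u}

/-- The proximal normal cone to `A` at `x`: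
`{λ (y - x) : λ ≥ 0, x is a closest point of A to y}`. -/
def proxCone (A : Set X) (x : X) : Set X :=
  {v | ∃ (l : ℝ) (y : X), 0 ≤ l ∧ dist y x = Metric.infDist y A ∧ v = l • (y - x)}

/-- The distance between two sets: `d(A,B) = inf {‖a - b‖ : a ∈ A, b ∈ B}`. -/
noncomputable def setDist (A B : Set X) : ℝ := sInf {r | ∃ a ∈ A, ∃ b ∈ B, r = dist a b}

lemma ray_smul_pos (c : ℝ) (hc : 0 < c) (b : X) : ray (c • b) = ray b := by
  ext w
  constructor
  · rintro ⟨l, hl, rfl⟩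
    exact ⟨l * c, by positivity, by rw [smul_smul]⟩
  · rintro ⟨l, hl, rfl⟩
    refine ⟨l * c⁻¹, by positivity, ?_⟩
    rw [smul_smul, mul_assoc, inv_mul_cancel₀ hc.ne', mul_one]

lemma ray_nonempty (b : X) : (ray b).Nonempty := ⟨0, 0, le_refl 0, (zero_smul ℝ b).symm⟩

lemma infDist_ray_unit (a b : X) (ha : ‖a‖ = 1) (hb : ‖b‖ = 1) :
    Metric.infDist a (ray b) = Real.sqrt (1 - (max (⟪a, b⟫_ℝ) 0) ^ 2) := by
  set t := ⟪a, b⟫_ℝ with ht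
  set m := max t 0 with hm
  have hmt : m * t = m ^ 2 := by
    rcases le_total t 0 with h | h
    · simp [hm, max_eq_right h]
    · simp [hm, max_eq_left h]; ring
  have hnorm : ∀ l : ℝ, ‖a - l • b‖ ^ 2 = 1 - 2 * l * t + l ^ 2 := by
    intro l
    rw [norm_sub_sq_real, real_inner_smul_right, norm_smul, ha, hb, ← ht]
    simp [mul_pow, sq_abs]
    ring
  have hd : ∀ l : ℝ, dist a (l • b) = Real.sqrt (1 - 2 * l * t + l ^ 2) := by
    intro l
    rw [dist_eq_norm, ← Real.sqrt_sq (norm_nonneg (a - l • b)), hnorm l]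
  apply le_antisymm
  · have hle := Metric.infDist_le_dist_of_mem (x := a) (s := ray b)
      (y := m • b) ⟨m, le_max_right _ _, rfl⟩
    calc Metric.infDist a (ray b) ≤ dist a (m • b) := hle
      _ = Real.sqrt (1 - (max t 0) ^ 2) := by
          rw [hd m]; congr 1; rw [← hm]; nlinarith [hmt]
  · by_contra hlt
    push_neg at hlt
    obtain ⟨y, ⟨l, hl, rfl⟩, hy⟩ := (Metric.infDist_lt_iff (ray_nonempty b)).1 hlt
    refine absurd hy (not_lt.2 ?_)
    rw [hd l]
    apply Real.sqrt_le_sqrt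
    rcases le_total t 0 with h | h
    · nlinarith [mul_nonneg hl (neg_nonneg.2 h), sq_nonneg m, sq_nonneg l]
    · have hmt' : t ≤ m := le_max_left t 0
      nlinarith [sq_nonneg (l - t)]

theorem stmt_0 (u v : X) (hu : u ≠ 0) (hv : v ≠ 0) :
    Metric.infDist (‖v‖⁻¹ • v) (ray u) = Metric.infDist (‖u‖⁻¹ • u) (ray v) := by
  have hnu : ‖‖u‖⁻¹ • u‖ = 1 := norm_smul_inv_norm hu
  have hnv : ‖‖v‖⁻¹ • v‖ = 1 := norm_smul_inv_norm hv
  have hru : ray u = ray (‖u‖⁻¹ • u) := (ray_smul_pos _ (inv_pos.2 (norm_pos_iff.2 hu)) u).symm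
  have hrv : ray v = ray (‖v‖⁻¹ • v) := (ray_smul_pos _ (inv_pos.2 (norm_pos_iff.2 hv)) v).symm
  rw [hru, hrv, infDist_ray_unit _ _ hnv hnu, infDist_ray_unit _ _ hnu hnv,
    real_inner_comm]
end

section
/- Let A and B be closed convex subsets of a Hilbert space X with d(A,B) > 0, and let a ∈ A, b ∈ B. Then ‖a−b‖ = d(A,B) if and only if b−a lies in the normal cone of A at a and a−b lies in the normal cone of B at b. -/
open Metric
open scoped InnerProductSpace

variable {X : Type*} [NormedAddCommGroup X] [InnerProductSpace ℝ X] [CompleteSpace X]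

lemma key_aux (v u : X) (h : ∀ t : ℝ, 0 < t → t ≤ 1 → ‖v‖ ≤ ‖v + t • u‖) :
    0 ≤ ⟪v, u⟫_ℝ := by
  by_contra hc
  push_neg at hc
  have hu : u ≠ 0 := by
    rintro rfl
    simp at hc
  have hun : (0:ℝ) < ‖u‖ := norm_pos_iff.2 hu
  set c : ℝ := -⟪v, u⟫_ℝ with hcdef
  have hcpos : 0 < c := by simp [hcdef]; linarith
  set t : ℝ := min 1 (c / ‖u‖ ^ 2) with htdef
  have ht0 : 0 < t := lt_min one_pos (div_pos hcpos (by positivity))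
  have ht1 : t ≤ 1 := min_le_left _ _
  have ht2 : t ≤ c / ‖u‖ ^ 2 := min_le_right _ _
  have ht3 : t * ‖u‖ ^ 2 ≤ c := by
    rw [← le_div_iff₀ (by positivity)]; exact ht2
  have h' := h t ht0 ht1
  have hsq : ‖v‖ ^ 2 ≤ ‖v + t • u‖ ^ 2 := by
    apply pow_le_pow_left₀ (norm_nonneg _) h'
  rw [norm_add_sq_real, real_inner_smul_right, norm_smul, mul_pow] at hsq
  simp only [Real.norm_eq_abs, sq_abs] at hsq
  nlinarith [sq_nonneg t]

theorem stmt_3 (A B : Set X) (hA : IsClosed A) (hB : IsClosed B)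
    (hAc : Convex ℝ A) (hBc : Convex ℝ B) (hd : 0 < setDist A B)
    (a : X) (ha : a ∈ A) (b : X) (hb : b ∈ B) :
    ‖a - b‖ = setDist A B ↔
      (∀ z ∈ A, ⟪b - a, z - a⟫_ℝ ≤ 0) ∧ (∀ z ∈ B, ⟪a - b, z - b⟫_ℝ ≤ 0) := by
  set S : Set ℝ := {r | ∃ a ∈ A, ∃ b ∈ B, r = dist a b} with hS
  have hbdd : BddBelow S := by
    refine ⟨0, ?_⟩
    rintro r ⟨x, _, y, _, rfl⟩
    exact dist_nonneg
  have hmem : ‖a - b‖ ∈ S := ⟨a, ha, b, hb, (dist_eq_norm a b).symm⟩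
  have hne : S.Nonempty := ⟨_, hmem⟩
  constructor
  · intro heq
    have hlow : ∀ x ∈ A, ∀ y ∈ B, ‖a - b‖ ≤ ‖x - y‖ := by
      intro x hx y hy
      rw [heq]
      exact csInf_le hbdd ⟨x, hx, y, hy, (dist_eq_norm x y).symm⟩
    constructor
    · intro z hz
      have h0 : 0 ≤ ⟪a - b, z - a⟫_ℝ := by
        apply key_aux
        intro t ht0 ht1
        have hmemz : a + t • (z - a) ∈ A := by
          have := hAc ha hz (a := 1 - t) (b := t) (by linarith) (le_of_lt ht0) (by ring)
          convert this using 1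
          module
        have := hlow _ hmemz b hb
        convert this using 2
        module
      have : ⟪b - a, z - a⟫_ℝ = -⟪a - b, z - a⟫_ℝ := by
        rw [← inner_neg_left]; congr 1; module
      linarith [this ▸ neg_nonpos_of_nonneg h0]
    · intro z hz
      have h0 : 0 ≤ ⟪b - a, z - b⟫_ℝ := by
        apply key_aux
        intro t ht0 ht1
        have hmemz : b + t • (z - b) ∈ B := by
          have := hBc hb hz (a := 1 - t) (b := t) (by linarith) (le_of_lt ht0) (by ring)
          convert this using 1
          module
        have := hlow a ha _ hmemz
        have h2 : ‖a - (b + t • (z - b))‖ = ‖b - a + t • (z - b)‖ := by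
          rw [← norm_neg]; congr 1; module
        have h3 : ‖a - b‖ = ‖b - a‖ := by rw [← norm_neg]; congr 1; module
        rw [h2, h3] at this
        exact this
      have : ⟪a - b, z - b⟫_ℝ = -⟪b - a, z - b⟫_ℝ := by
        rw [← inner_neg_left]; congr 1; module
      linarith [this ▸ neg_nonpos_of_nonneg h0]
  · rintro ⟨h1, h2⟩
    have hub : setDist A B ≤ ‖a - b‖ := csInf_le hbdd hmem
    have hpos : 0 < ‖a - b‖ := lt_of_lt_of_le hd hub
    refine le_antisymm (le_csInf hne ?_) hub
    rintro r ⟨x, hx, y, hy, rfl⟩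
    rw [dist_eq_norm]
    have ha' : 0 ≤ ⟪a - b, x - a⟫_ℝ := by
      have := h1 x hx
      have e : ⟪b - a, x - a⟫_ℝ = -⟪a - b, x - a⟫_ℝ := by
        rw [← inner_neg_left]; congr 1; module
      linarith [e ▸ this]
    have hb' : ⟪a - b, y - b⟫_ℝ ≤ 0 := h2 y hy
    have hdecomp : ⟪a - b, x - y⟫_ℝ
        = ⟪a - b, x - a⟫_ℝ - ⟪a - b, y - b⟫_ℝ + ‖a - b‖ ^ 2 := by
      rw [← real_inner_self_eq_norm_sq, ← inner_sub_right, ← inner_add_right]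
      congr 1
      module
    have hcs : ⟪a - b, x - y⟫_ℝ ≤ ‖a - b‖ * ‖x - y‖ := real_inner_le_norm _ _
    nlinarith
end

section
/- Let A, B be closed convex subsets of a Hilbert space, a ∈ A, b ∈ B with ‖a−b‖ = d(A,B) > 0, let λ > 0 and v = λ(b−a). Then ‖(a−v) − b‖ = d(A−v, B), where A−v = {x−v : x ∈ A}. -/
open Metric
open scoped InnerProductSpace

variable {X : Type*} [NormedAddCommGroup X] [InnerProductSpace ℝ X] [CompleteSpace X]

theorem stmt_4 (A B : Set X) (hA : IsClosed A) (hB : IsClosed B)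
    (hAc : Convex ℝ A) (hBc : Convex ℝ B)
    (a : X) (ha : a ∈ A) (b : X) (hb : b ∈ B)
    (hmin : ‖a - b‖ = setDist A B) (hd : 0 < setDist A B)
    (l : ℝ) (hl : 0 < l) (v : X) (hv : v = l • (b - a)) :
    ‖(a - v) - b‖ = setDist ((fun x => x - v) '' A) B := by
  have hbdd : ∀ (S T : Set X), BddBelow {r | ∃ a ∈ S, ∃ b ∈ T, r = dist a b} := by
    intro S T
    exact ⟨0, fun r ⟨x, _, y, _, hr⟩ => hr ▸ dist_nonneg⟩
  -- every pairwise distance is ≥ setDist A B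
  have hlow : ∀ x ∈ A, ∀ y ∈ B, setDist A B ≤ dist x y := fun x hx y hy =>
    csInf_le (hbdd A B) ⟨x, hx, y, hy, rfl⟩
  -- a is a closest point of A to b
  haveI : Nonempty ↑A := ⟨⟨a, ha⟩⟩
  haveI : Nonempty ↑B := ⟨⟨b, hb⟩⟩
  have hAvar : ∀ w ∈ A, ⟪b - a, w - a⟫_ℝ ≤ 0 := by
    have : ‖b - a‖ = ⨅ w : A, ‖b - w‖ := by
      refine le_antisymm (le_ciInf fun ⟨w, hw⟩ => ?_)
        (ciInf_le (f := fun w : A => ‖b - w‖) ⟨0, fun r ⟨_, h⟩ => h ▸ norm_nonneg _⟩ ⟨a, ha⟩)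
      have := hlow w hw b hb
      rw [dist_eq_norm] at this
      calc ‖b - a‖ = ‖a - b‖ := by rw [norm_sub_rev]
        _ = setDist A B := hmin
        _ ≤ ‖w - b‖ := this
        _ = ‖b - w‖ := norm_sub_rev _ _
    exact (norm_eq_iInf_iff_real_inner_le_zero hAc ha).1 this
  have hBvar : ∀ w ∈ B, ⟪a - b, w - b⟫_ℝ ≤ 0 := by
    have : ‖a - b‖ = ⨅ w : B, ‖a - w‖ := by
      refine le_antisymm (le_ciInf fun ⟨w, hw⟩ => ?_)
        (ciInf_le (f := fun w : B => ‖a - w‖) ⟨0, fun r ⟨_, h⟩ => h ▸ norm_nonneg _⟩ ⟨b, hb⟩)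
      have := hlow a ha w hw
      rw [dist_eq_norm] at this
      exact hmin.trans_le this
    exact (norm_eq_iInf_iff_real_inner_le_zero hBc hb).1 this
  -- key lower bound
  have key : ∀ x ∈ A, ∀ y ∈ B, (1 + l) * ‖a - b‖ ≤ ‖(x - v) - y‖ := by
    intro x hx y hy
    have h1 : ‖a - b‖ ^ 2 ≤ ⟪x - y, a - b⟫_ℝ := by
      have e : ⟪x - y, a - b⟫_ℝ
          = (-⟪b - a, x - a⟫_ℝ) + (-⟪a - b, y - b⟫_ℝ) + ‖a - b‖ ^ 2 := by
        rw [← real_inner_self_eq_norm_sq]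
        simp only [inner_sub_left, inner_sub_right]
        linear_combination real_inner_comm a x - real_inner_comm a y
          - real_inner_comm b x + real_inner_comm b y
      rw [e]
      have h2 := hAvar x hx
      have h3 := hBvar y hy
      nlinarith
    have h4 : ‖a - b‖ ≤ ‖x - y‖ := by
      have := hlow x hx y hy
      rw [dist_eq_norm] at this
      exact hmin ▸ this
    have h5 : ((1 + l) * ‖a - b‖) ^ 2 ≤ ‖(x - v) - y‖ ^ 2 := by
      have e : (x - v) - y = (x - y) + l • (a - b) := by
        rw [hv]; module
      rw [e, norm_add_sq_real, real_inner_smul_right, norm_smul, Real.norm_eq_abs,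
        abs_of_pos hl]
      have hna := norm_nonneg (a - b)
      nlinarith
    have hnn : 0 ≤ (1 + l) * ‖a - b‖ :=
      mul_nonneg (by linarith) (norm_nonneg _)
    nlinarith [norm_nonneg ((x - v) - y)]
  have hab : ‖(a - v) - b‖ = (1 + l) * ‖a - b‖ := by
    have e : (a - v) - b = (1 + l) • (a - b) := by rw [hv]; module
    rw [e, norm_smul, Real.norm_eq_abs, abs_of_pos (by linarith)]
  refine le_antisymm ?_ ?_
  · rw [hab]
    refine le_csInf ⟨dist (a - v) b, ⟨a - v, ⟨a, ha, rfl⟩, b, hb, rfl⟩⟩ ?_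
    rintro r ⟨x', ⟨x, hx, rfl⟩, y, hy, rfl⟩
    rw [dist_eq_norm]
    exact key x hx y hy
  · have : ‖(a - v) - b‖ = dist (a - v) b := (dist_eq_norm _ _).symm
    rw [this]
    exact csInf_le (hbdd _ _) ⟨a - v, ⟨a, ha, rfl⟩, b, hb, rfl⟩
end

section
/- Let A, B be closed subsets of a Hilbert space X, x ∈ A\B, y a projection of x onto B with d(y,A) > d(A,B), α ∈ (0,1), and δ = α‖x−y‖. Suppose that for all z ∈ A∩B_δ(x)\B, max{ d((z−y)/‖z−y‖, N_B(y)), d((y−z)/‖z−y‖, N_A(z)) } ≥ α. Then d(y,A) ≤ (1−α²)‖x−y‖. -/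
open Metric
open scoped InnerProductSpace

variable {X : Type*} [NormedAddCommGroup X] [InnerProductSpace ℝ X] [CompleteSpace X]

open Filter
open scoped Topology

set_option linter.unusedSectionVars false

section AuxLemmas

lemma le_of_sq_le_sq' {a b : ℝ} (ha : 0 ≤ a) (hb : 0 ≤ b) (h : a^2 ≤ b^2) : a ≤ b := by
  nlinarith

lemma quad_key {s t e : ℝ} (hs : 0 < s) (h : t^2 = s^2 + e) : t ≤ s + e/(2*s) := by
  have h2 : (0:ℝ) < 2*s := by positivity
  rw [← sub_le_iff_le_add', le_div_iff₀ h2]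
  nlinarith [sq_nonneg (t - s)]

lemma expand_sq (a h : X) : ‖a + h‖^2 = ‖a‖^2 + (2*⟪a,h⟫_ℝ + ‖h‖^2) := by
  rw [← real_inner_self_eq_norm_sq, ← real_inner_self_eq_norm_sq, ← real_inner_self_eq_norm_sq,
    inner_add_add_self, real_inner_comm h a]
  ring

lemma norm_quad (a h : X) (ha : 0 < ‖a‖) :
    ‖a + h‖ ≤ ‖a‖ + (2*⟪a,h⟫_ℝ + ‖h‖^2)/(2*‖a‖) :=
  quad_key ha (expand_sq a h)

lemma sqrt_norm_quad (a h : X) (β : ℝ) (hβ : 0 < β) :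
    Real.sqrt (‖a+h‖^2+β^2) ≤ Real.sqrt (‖a‖^2+β^2)
      + (2*⟪a,h⟫_ℝ + ‖h‖^2)/(2*Real.sqrt (‖a‖^2+β^2)) := by
  have h1 : (0:ℝ) < Real.sqrt (‖a‖^2+β^2) := Real.sqrt_pos.2 (by positivity)
  refine quad_key h1 ?_
  rw [Real.sq_sqrt (by positivity), Real.sq_sqrt (by positivity), expand_sq a h]
  ring

lemma mem_proxCone_of_quad {A : Set X} {z : X} (hz : z ∈ A) (v : X) (σ : ℝ) (hσ : 0 < σ)
    (h : ∀ z' ∈ A, ⟪v, z' - z⟫_ℝ ≤ σ * ‖z' - z‖^2) : v ∈ proxCone A z := by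
  by_cases hv : v = 0
  · exact ⟨0, z, le_refl 0, by simp [Metric.infDist_zero_of_mem hz], by simp [hv]⟩
  · refine ⟨2*σ, z + (2*σ)⁻¹ • v, by positivity, ?_, ?_⟩
    · refine le_antisymm ?_ (Metric.infDist_le_dist_of_mem hz)
      by_contra hlt
      push_neg at hlt
      obtain ⟨z', hz', hlt'⟩ := (Metric.infDist_lt_iff ⟨z, hz⟩).1 hlt
      have hd1 : dist (z + (2*σ)⁻¹ • v) z = ‖(2*σ)⁻¹ • v‖ := by
        rw [dist_eq_norm]; congr 1; abel
      have hd2 : dist (z + (2*σ)⁻¹ • v) z' = ‖(z' - z) - (2*σ)⁻¹ • v‖ := by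
        rw [dist_eq_norm, ← norm_neg]; congr 1; abel
      rw [hd1] at hlt'
      rw [hd2] at hlt'
      have hsq : ‖(2*σ)⁻¹ • v‖^2 ≤ ‖(z' - z) - (2*σ)⁻¹ • v‖^2 := by
        have e1 : ‖(z' - z) - (2*σ)⁻¹ • v‖^2
            = ‖z' - z‖^2 - 2*((2*σ)⁻¹ * ⟪v, z' - z⟫_ℝ) + ‖(2*σ)⁻¹ • v‖^2 := by
          have := expand_sq (z' - z) (-((2*σ)⁻¹ • v))
          simp only [← sub_eq_add_neg, inner_neg_right, norm_neg] at this
          rw [this, real_inner_smul_right, real_inner_comm]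
          ring
        have h2 := h z' hz'
        have hσ' : (2*σ)⁻¹ * ⟪v, z' - z⟫_ℝ ≤ (2*σ)⁻¹ * (σ * ‖z' - z‖^2) :=
          mul_le_mul_of_nonneg_left h2 (by positivity)
        have e2 : (2*σ)⁻¹ * (σ * ‖z' - z‖^2) = ‖z' - z‖^2/2 := by
          field_simp
        nlinarith
      nlinarith [norm_nonneg ((2*σ)⁻¹ • v), norm_nonneg ((z' - z) - (2*σ)⁻¹ • v)]
    · rw [add_sub_cancel_left, smul_smul, mul_inv_cancel₀ (by positivity), one_smul]

lemma distB_lt (B : Set X) (x y z : X) (α : ℝ) (hα0 : 0 < α) (hα1 : α < 1)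
    (hxy : x ≠ y) (hzy : z ≠ y)
    (hyproj : dist x y = Metric.infDist x B)
    (hq : ‖z - x‖ < α * ‖x - y‖) :
    Metric.infDist (‖z - y‖⁻¹ • (z - y)) (proxCone B y) < α := by
  set d : ℝ := ‖x - y‖ with hd_def
  set r : ℝ := ‖z - y‖ with hr_def
  set q : ℝ := ‖z - x‖ with hq_def
  have hd : 0 < d := by rw [hd_def]; simpa [sub_eq_zero] using hxy
  have hr : 0 < r := by rw [hr_def]; simpa [sub_eq_zero] using hzy
  set T : ℝ := ⟪z - x, x - y⟫_ℝ with hT_def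
  set P : ℝ := ⟪z - y, x - y⟫_ℝ with hP_def
  have hsum : (x - y) + (z - x) = z - y := by abel
  have hP : P = d^2 + T := by
    rw [hP_def, ← hsum, inner_add_left, real_inner_self_eq_norm_sq]
  have hr2 : r^2 = d^2 + 2*T + q^2 := by
    have := expand_sq (x - y) (z - x)
    rw [hsum] at this
    rw [hr_def, this, real_inner_comm]; ring
  have hTd : |T| ≤ q * d := by
    rw [hT_def, hq_def, hd_def]
    exact abs_real_inner_le_norm _ _
  have hq0 : 0 ≤ q := norm_nonneg _
  have hPpos : 0 < P := by
    rw [hP]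
    have : -(q*d) ≤ T := neg_le_of_abs_le hTd
    nlinarith
  set l : ℝ := P/(r*d^2) with hl_def
  have hl : 0 ≤ l := le_of_lt (by positivity)
  have he : l • (x - y) ∈ proxCone B y := ⟨l, x, hl, hyproj, rfl⟩
  set u : X := ‖z - y‖⁻¹ • (z - y) with hu_def
  have hu1 : ‖u‖ = 1 := by
    rw [hu_def, norm_smul, Real.norm_eq_abs, ← hr_def,
      abs_of_nonneg (by positivity : (0:ℝ) ≤ r⁻¹)]
    exact inv_mul_cancel₀ hr.ne'
  have hue : ‖u - l • (x - y)‖^2 = 1 - P^2/(r^2*d^2) := by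
    have h1 : ‖u - l • (x - y)‖^2 = ‖u‖^2 - 2*⟪u, l • (x - y)⟫_ℝ + ‖l • (x - y)‖^2 := by
      rw [@norm_sub_sq_real]
    have h2 : ⟪u, l • (x - y)⟫_ℝ = r⁻¹ * (l * P) := by
      rw [hu_def, real_inner_smul_left, real_inner_smul_right, ← hr_def, hP_def,
        real_inner_comm]
    have h3 : ‖l • (x - y)‖^2 = l^2 * d^2 := by
      rw [norm_smul, Real.norm_eq_abs, abs_of_nonneg hl, ← hd_def, mul_pow]
    rw [h1, h2, h3, hu1, hl_def]
    field_simp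
    ring
  have hkey : (1 - α^2) * (r^2 * d^2) < P^2 := by
    have h5 : P^2 - (1-α^2)*(r^2*d^2) = (T + α^2*d^2)^2 + (1-α^2)*d^2*(α^2*d^2 - q^2) := by
      rw [hP, hr2]; ring
    have hα2 : 0 < 1 - α^2 := by nlinarith
    have hqd : q^2 < α^2*d^2 := by nlinarith [mul_pos hα0 hd]
    have h7 : 0 < (1-α^2)*d^2*(α^2*d^2 - q^2) :=
      mul_pos (mul_pos hα2 (by positivity)) (by linarith)
    linarith [sq_nonneg (T + α^2*d^2)]
  have hfin : ‖u - l • (x - y)‖ < α := by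
    have h6 : ‖u - l • (x - y)‖^2 < α^2 := by
      rw [hue, sub_lt_iff_lt_add]
      have hrd : 0 < r^2*d^2 := by positivity
      have : (1-α^2) < P^2/(r^2*d^2) := by
        rw [lt_div_iff₀ hrd]; linarith
      linarith
    exact lt_of_pow_lt_pow_left₀ 2 hα0.le h6
  calc Metric.infDist u (proxCone B y) ≤ dist u (l • (x - y)) :=
        Metric.infDist_le_dist_of_mem he
    _ = ‖u - l • (x - y)‖ := by rw [dist_eq_norm]
    _ < α := hfin

end AuxLemmas


set_option maxHeartbeats 2000000 in
lemma core (A B : Set X) (hA : IsClosed A)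
    (x y : X) (hx : x ∈ A) (hxB : x ∉ B)
    (hy : y ∈ B) (hyproj : dist x y = Metric.infDist x B)
    (α : ℝ) (hα0 : 0 < α) (hα1 : α < 1)
    (hcond : ∀ z ∈ A ∩ Metric.ball x (α * ‖x - y‖), z ∉ B →
      α ≤ max (Metric.infDist (‖z - y‖⁻¹ • (z - y)) (proxCone B y))
              (Metric.infDist (‖z - y‖⁻¹ • (y - z)) (proxCone A z))) :
    Metric.infDist y A ≤ (1 - α ^ 2) * ‖x - y‖ := by
  by_contra hcon
  push_neg at hcon
  -- basic quantities
  set d : ℝ := ‖x - y‖ with hd_def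
  have hxy : x ≠ y := fun h => hxB (h ▸ hy)
  have hd : 0 < d := by rw [hd_def]; simpa [sub_eq_zero] using hxy
  set m : ℝ := Metric.infDist y A with hm_def
  have hfm : ∀ w ∈ A, m ≤ ‖w - y‖ := by
    intro w hw
    calc m ≤ dist y w := Metric.infDist_le_dist_of_mem hw
      _ = ‖w - y‖ := by rw [dist_eq_norm, norm_sub_rev]
  have hm0 : 0 < m := lt_trans (mul_pos (by nlinarith) hd) hcon
  have hmd : m ≤ d := hfm x hx
  set ε : ℝ := d - m with hε_def
  have hε0 : 0 ≤ ε := by rw [hε_def]; linarith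
  have hεlt : ε < α^2 * d := by rw [hε_def]; nlinarith
  set κ : ℝ := (ε/(α*d) + α)/2 with hκ_def
  have had : 0 < α * d := by positivity
  have hκ0 : 0 < κ := by
    have : 0 ≤ ε/(α*d) := by positivity
    rw [hκ_def]; linarith
  have hκα : κ < α := by
    have : ε/(α*d) < α := by rw [div_lt_iff₀ had]; nlinarith
    rw [hκ_def]; linarith
  have hεκ : ε < κ*(α*d) := by
    have h1 : κ*(α*d) = (ε + α^2*d)/2 := by
      rw [hκ_def]; field_simp
    rw [h1]; linarith
  have hεκ' : ε/κ < α*d := by rw [div_lt_iff₀ hκ0]; nlinarith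
  set γ : ℝ := (α - κ)/2 with hγ_def
  have hγ0 : 0 < γ := by rw [hγ_def]; linarith
  set β : ℝ := (α*d - ε/κ)/2 with hβ_def
  have hβ0 : 0 < β := by rw [hβ_def]; linarith
  set c₀ : ℝ := min 1 (γ^2/(256*(ε+1))) with hc₀_def
  have hc₀0 : 0 < c₀ := lt_min one_pos (by positivity)
  have hc₀1 : c₀ ≤ 1 := min_le_left _ _
  have hc₀γ : c₀ ≤ γ^2/(256*(ε+1)) := min_le_right _ _
  set τ : ℝ := γ/16 with hτ_def
  have hτ0 : 0 < τ := by rw [hτ_def]; linarith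
  -- the functions
  set f : X → ℝ := fun w => ‖w - y‖ with hf_def
  set G : X → ℝ := fun w => Real.sqrt (‖w - x‖^2 + β^2) with hG_def
  set P : X → ℝ := fun w => κ * (G w - β) with hP_def
  have hGβ : ∀ w, β ≤ G w := by
    intro w
    rw [hG_def]
    calc β = Real.sqrt (β^2) := (Real.sqrt_sq hβ0.le).symm
      _ ≤ _ := Real.sqrt_le_sqrt (by nlinarith [sq_nonneg ‖w - x‖])
  have hGnorm : ∀ w, ‖w - x‖ ≤ G w := by
    intro w
    rw [hG_def]
    calc ‖w - x‖ = Real.sqrt (‖w - x‖^2) := (Real.sqrt_sq (norm_nonneg _)).symm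
      _ ≤ _ := Real.sqrt_le_sqrt (by nlinarith)
  have hG0 : ∀ w, 0 < G w := fun w => lt_of_lt_of_le hβ0 (hGβ w)
  have hPnn : ∀ w, 0 ≤ P w := by
    intro w
    rw [hP_def]
    have := hGβ w
    have : 0 ≤ G w - β := by linarith
    positivity
  have hPx : P x = 0 := by
    rw [hP_def, hG_def]
    simp [Real.sqrt_sq hβ0.le]
  set c : ℕ → ℝ := fun n => c₀ * (1/2)^n with hc_def
  have hcpos : ∀ n, 0 < c n := fun n => by rw [hc_def]; positivity
  set E : ℕ → ℝ := fun n => (if n = 0 then ε else 0) + c₀ * τ^2 * (1/8)^n with hE_def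
  have hEpos : ∀ n, 0 < E n := by
    intro n
    simp only [hE_def]
    have h1 : (0:ℝ) < c₀ * τ^2 * (1/8)^n := by positivity
    split <;> linarith
  -- the chooser
  have hnext : ∀ (Φ : X → ℝ), (∀ w ∈ A, 0 ≤ Φ w) → ∀ z₀ ∈ A, ∀ e : ℝ, 0 < e →
      ∃ w, w ∈ A ∧ Φ w ≤ sInf (Φ '' A) + e ∧ Φ w ≤ Φ z₀ := by
    intro Φ hΦ z₀ hz₀ e he
    by_cases hcase : Φ z₀ < sInf (Φ '' A) + e
    · exact ⟨z₀, hz₀, hcase.le, le_refl _⟩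
    · push_neg at hcase
      obtain ⟨v, hv, hlt⟩ := Real.lt_sInf_add_pos (Set.Nonempty.image Φ ⟨z₀, hz₀⟩) he
      obtain ⟨w, hw, rfl⟩ := hv
      exact ⟨w, hw, hlt.le, le_trans hlt.le hcase⟩
  have total : ∀ (Φ : X → ℝ) (z₀ : X) (e : ℝ), ∃ w : X,
      (z₀ ∈ A ∧ 0 < e ∧ (∀ w' ∈ A, 0 ≤ Φ w')) →
      (w ∈ A ∧ Φ w ≤ sInf (Φ '' A) + e ∧ Φ w ≤ Φ z₀) := by
    intro Φ z₀ e
    by_cases h : z₀ ∈ A ∧ 0 < e ∧ (∀ w' ∈ A, 0 ≤ Φ w')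
    · obtain ⟨w, hw⟩ := hnext Φ h.2.2 z₀ h.1 e h.2.1
      exact ⟨w, fun _ => hw⟩
    · exact ⟨z₀, fun hc => absurd hc h⟩
  choose pick hpick using total
  -- the sequence
  set S : ℕ → X × (X → ℝ) := fun n => Nat.rec
      (motive := fun _ => X × (X → ℝ))
      (x, fun w => f w + P w)
      (fun n p => (pick (fun w => p.2 w + c n * ‖w - p.1‖^2) p.1 (E (n+1)),
                   fun w => p.2 w + c n * ‖w - p.1‖^2)) n with hS_def
  set zs : ℕ → X := fun n => (S n).1 with hzs_def
  set Φ : ℕ → X → ℝ := fun n => (S n).2 with hΦ_def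
  have hz0 : zs 0 = x := rfl
  have hΦ0 : Φ 0 = fun w => f w + P w := rfl
  have hΦrec : ∀ n, Φ (n+1) = fun w => Φ n w + c n * ‖w - zs n‖^2 := fun n => rfl
  have hzrec : ∀ n, zs (n+1) = pick (Φ (n+1)) (zs n) (E (n+1)) := fun n => rfl
  clear_value zs Φ
  clear_value S
  clear_value f G P c E
  -- invariants
  have hΦnn : ∀ n, ∀ w ∈ A, 0 ≤ Φ n w := by
    intro n
    induction n with
    | zero =>
      intro w hw
      rw [hΦ0]
      have h0 : 0 ≤ f w := by simp only [hf_def]; positivity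
      have := hPnn w
      dsimp only
      linarith
    | succ n ih =>
      intro w hw
      rw [hΦrec n]
      have h1 := ih w hw
      have h2 : 0 ≤ c n * ‖w - zs n‖^2 := mul_nonneg (hcpos n).le (by positivity)
      dsimp only
      linarith
  have hinv : ∀ n, zs n ∈ A ∧ Φ n (zs n) ≤ sInf (Φ n '' A) + E n := by
    intro n
    induction n with
    | zero =>
      refine ⟨by rw [hz0]; exact hx, ?_⟩
      have hval : Φ 0 (zs 0) = d := by
        rw [hz0, hΦ0]
        dsimp only
        simp only [hf_def, hPx]
        rw [← hd_def]
        ring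
      have hlow : m ≤ sInf (Φ 0 '' A) := by
        apply le_csInf (Set.Nonempty.image _ ⟨x, hx⟩)
        rintro b ⟨w, hw, rfl⟩
        have h1 := hfm w hw
        have h2 := hPnn w
        simp only [hΦ0, hf_def]
        linarith
      have hE0 : ε ≤ E 0 := by
        have hE0' : E 0 = ε + c₀ * τ^2 := by simp only [hE_def]; norm_num
        rw [hE0']
        have : (0:ℝ) < c₀ * τ^2 := by positivity
        linarith
      rw [hval]
      have : d = m + ε := by rw [hε_def]; ring
      linarith
    | succ n ih =>
      have hspec := hpick (Φ (n+1)) (zs n) (E (n+1)) ⟨ih.1, hEpos (n+1), hΦnn (n+1)⟩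
      rw [← hzrec n] at hspec
      exact ⟨hspec.1, hspec.2.1⟩
  have hzA : ∀ n, zs n ∈ A := fun n => (hinv n).1
  have hspec2 : ∀ n, Φ (n+1) (zs (n+1)) ≤ Φ n (zs n) := by
    intro n
    have hspec := hpick (Φ (n+1)) (zs n) (E (n+1)) ⟨hzA n, hEpos (n+1), hΦnn (n+1)⟩
    rw [← hzrec n] at hspec
    calc Φ (n+1) (zs (n+1)) ≤ Φ (n+1) (zs n) := hspec.2.2
      _ = Φ n (zs n) := by rw [hΦrec n]; simp
  have hIle : ∀ n, ∀ w ∈ A, sInf (Φ n '' A) ≤ Φ n w := by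
    intro n w hw
    apply csInf_le ⟨0, by rintro b ⟨w', hw', rfl⟩; exact hΦnn n w' hw'⟩
    exact Set.mem_image_of_mem _ hw
  -- step bounds
  have hstep : ∀ n, c n * ‖zs (n+1) - zs n‖^2 ≤ E n := by
    intro n
    have h1 : Φ (n+1) (zs (n+1)) = Φ n (zs (n+1)) + c n * ‖zs (n+1) - zs n‖^2 := by
      rw [hΦrec n]
    have h2 := hspec2 n
    have h3 := hIle n (zs (n+1)) (hzA (n+1))
    have h4 := (hinv n).2
    linarith
  set C : ℝ := Real.sqrt (ε/c₀) + τ with hC_def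
  clear_value C
  have hC0 : 0 < C := by
    have : 0 ≤ Real.sqrt (ε/c₀) := Real.sqrt_nonneg _
    rw [hC_def]; linarith
  have hτC : τ^2 ≤ C^2 := by
    have hs := Real.sqrt_nonneg (ε/c₀)
    rw [hC_def]
    nlinarith
  have hEc : ∀ n, E n ≤ c n * (C * (1/2)^n)^2 := by
    intro n
    match n with
    | 0 =>
      have h1 : Real.sqrt (ε/c₀)^2 = ε/c₀ := Real.sq_sqrt (by positivity)
      have h2 : c₀ * (ε/c₀) = ε := by field_simp
      have hs := Real.sqrt_nonneg (ε/c₀)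
      have hE0 : E 0 = ε + c₀ * τ^2 := by simp only [hE_def]; norm_num
      have hc0 : c 0 = c₀ := by simp only [hc_def]; norm_num
      rw [hE0, hc0, pow_zero, mul_one, hC_def]
      have h3 : c₀ * Real.sqrt (ε/c₀)^2 = ε := by rw [h1]; exact h2
      nlinarith [h3, mul_nonneg (mul_nonneg hc₀0.le hs) hτ0.le]
    | (k+1) =>
      have hE1 : E (k+1) = c₀ * τ^2 * ((1/2:ℝ)^(k+1) * (1/4:ℝ)^(k+1)) := by
        simp only [hE_def, if_neg (Nat.succ_ne_zero k), zero_add]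
        rw [← mul_pow]
        norm_num
      have h0' : (0:ℝ) ≤ c₀*((1/2:ℝ)^(k+1)*(1/4:ℝ)^(k+1)) := by positivity
      have hsq : ((1/2:ℝ)^(k+1))^2 = (1/4:ℝ)^(k+1) := by
        rw [← pow_mul, mul_comm (k+1) 2, pow_mul]
        norm_num
      calc E (k+1) = τ^2 * (c₀*((1/2:ℝ)^(k+1)*(1/4:ℝ)^(k+1))) := by rw [hE1]; ring
        _ ≤ C^2 * (c₀*((1/2:ℝ)^(k+1)*(1/4:ℝ)^(k+1))) := mul_le_mul_of_nonneg_right hτC h0'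
        _ = c (k+1) * (C * (1/2)^(k+1))^2 := by
            simp only [hc_def]
            rw [mul_pow, hsq]
            ring
  have hdist : ∀ n, dist (zs n) (zs (n+1)) ≤ C * (1/2)^n := by
    intro n
    have h1 := hstep n
    have h2 := hEc n
    have h3 : c n * ‖zs (n+1) - zs n‖^2 ≤ c n * (C * (1/2)^n)^2 := le_trans h1 h2
    have h4 : ‖zs (n+1) - zs n‖^2 ≤ (C * (1/2)^n)^2 :=
      le_of_mul_le_mul_left (by linarith) (hcpos n)
    have h5 : ‖zs (n+1) - zs n‖ ≤ C * (1/2)^n :=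
      le_of_sq_le_sq' (norm_nonneg _) (by positivity) h4
    rw [dist_eq_norm, norm_sub_rev]
    exact h5
  -- limit point
  have hcauchy : CauchySeq zs := cauchySeq_of_le_geometric (1/2) C (by norm_num) hdist
  obtain ⟨z, hz⟩ := cauchySeq_tendsto_of_complete hcauchy
  have hzmem : z ∈ A := hA.mem_of_tendsto hz (Eventually.of_forall hzA)
  have hdistz : ∀ n, dist (zs n) z ≤ 2*C*(1/2)^n := by
    intro n
    have := dist_le_of_le_geometric_of_tendsto (1/2) C (by norm_num) hdist hz n
    calc dist (zs n) z ≤ C * (1/2)^n / (1 - 1/2) := this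
      _ = 2*C*(1/2)^n := by ring
  -- monotonicity and continuity
  have hΦmono : ∀ n w, Φ n w ≤ Φ (n+1) w := by
    intro n w
    rw [hΦrec n]
    have h1 : 0 ≤ c n * ‖w - zs n‖^2 := mul_nonneg (hcpos n).le (by positivity)
    dsimp only
    linarith
  have hΦmono' : ∀ n m', n ≤ m' → ∀ w, Φ n w ≤ Φ m' w := by
    intro n m' hnm w
    induction m', hnm using Nat.le_induction with
    | base => exact le_refl _
    | succ m'' hm ih => exact le_trans ih (hΦmono m'' w)
  have hanti : ∀ n m', n ≤ m' → Φ m' (zs m') ≤ Φ n (zs n) := by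
    intro n m' hnm
    induction m', hnm using Nat.le_induction with
    | base => exact le_refl _
    | succ m'' hm ih => exact le_trans (hspec2 m'') ih
  have hfcont : Continuous f := by
    rw [hf_def]; exact (continuous_id.sub continuous_const).norm
  have hPcont : Continuous P := by
    rw [hP_def]
    apply Continuous.mul continuous_const
    apply Continuous.sub _ continuous_const
    rw [hG_def]
    exact Real.continuous_sqrt.comp
      ((((continuous_id.sub continuous_const).norm.pow 2).add continuous_const))
  have hΦcont : ∀ n, Continuous (Φ n) := by
    intro n
    induction n with
    | zero => rw [hΦ0]; exact hfcont.add hPcont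
    | succ n ih =>
      rw [hΦrec n]
      exact ih.add (continuous_const.mul ((continuous_id.sub continuous_const).norm.pow 2))
  have hΦz : ∀ n, Φ n z ≤ Φ n (zs n) := by
    intro n
    have htd : Tendsto (fun m' => Φ n (zs m')) atTop (𝓝 (Φ n z)) :=
      ((hΦcont n).tendsto z).comp hz
    apply le_of_tendsto htd
    filter_upwards [eventually_ge_atTop n] with m' hm'
    exact le_trans (hΦmono' n m' hm' (zs m')) (hanti n m' hm')
  have hmin : ∀ n, ∀ w ∈ A, Φ n z ≤ Φ n w + E n := by
    intro n w hw
    have h1 := hIle n w hw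
    have h2 := (hinv n).2
    have h3 := hΦz n
    linarith
  -- energy bound
  have hval0 : Φ 0 (zs 0) = d := by
    rw [hz0, hΦ0]
    dsimp only
    simp only [hf_def, hPx]
    rw [← hd_def]
    ring
  have henergy : f z + P z ≤ d := by
    have h1 := hΦz 0
    rw [hval0, hΦ0] at h1
    exact h1
  have hGz : G z ≤ ε/κ + β := by
    have h1 : κ * (G z - β) ≤ ε := by
      have h2 := hfm z hzmem
      have h3 : P z = κ * (G z - β) := by rw [hP_def]
      have h4 : m ≤ f z := by rw [hf_def]; exact h2
      rw [hε_def]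
      linarith [henergy, h3 ▸ (le_refl (P z))]
    have h5 : G z - β ≤ ε/κ := by rw [le_div_iff₀ hκ0]; linarith
    linarith
  have hq : ‖z - x‖ < α*d := by
    have h1 := hGnorm z
    have h2 : ε/κ + β = α*d - β := by rw [hβ_def]; ring
    linarith
  have hzB : z ∉ B := by
    intro hzB
    have h1 : Metric.infDist x B ≤ dist x z := Metric.infDist_le_dist_of_mem hzB
    rw [← hyproj] at h1
    rw [dist_eq_norm, dist_eq_norm, norm_sub_rev x z] at h1
    rw [← hd_def] at h1
    nlinarith
  have hzy : z ≠ y := fun h => hzB (h ▸ hy)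
  set r : ℝ := ‖z - y‖ with hr_def
  clear_value r
  have hr0 : 0 < r := by rw [hr_def]; simpa [sub_eq_zero] using hzy
  -- gradient pieces
  set g₀ : X := (κ / G z) • (z - x) with hg₀_def
  clear_value g₀
  have hg₀norm : ‖g₀‖ ≤ κ := by
    have h2 := hG0 z
    rw [hg₀_def, norm_smul, Real.norm_eq_abs, abs_of_nonneg (by positivity)]
    rw [div_mul_eq_mul_div, div_le_iff₀ h2]
    have h1 := hGnorm z
    nlinarith
  set gQs : ℕ → X := fun k => (2 * c k) • (z - zs k) with hgQs_def
  clear_value gQs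
  have hgQbound : ∀ k, ‖gQs k‖ ≤ (4*c₀*C) * (1/2)^k := by
    intro k
    have h1 : ‖z - zs k‖ ≤ 2*C*(1/2)^k := by
      have := hdistz k
      rw [dist_eq_norm, norm_sub_rev] at this
      exact this
    have h2 : ((1:ℝ)/2)^k ≤ 1 := by
      apply pow_le_one₀ <;> norm_num
    have h3 : (0:ℝ) ≤ (1/2:ℝ)^k := by positivity
    rw [hgQs_def]
    dsimp only
    rw [norm_smul, Real.norm_eq_abs,
      abs_of_nonneg (by linarith [hcpos k] : (0:ℝ) ≤ 2 * c k), hc_def]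
    dsimp only
    calc 2 * (c₀ * (1/2)^k) * ‖z - zs k‖ ≤ 2 * (c₀ * (1/2)^k) * (2*C*(1/2)^k) := by
          apply mul_le_mul_of_nonneg_left h1 (by positivity)
      _ = (4*c₀*C) * ((1/2)^k * (1/2)^k) := by ring
      _ ≤ (4*c₀*C) * ((1/2)^k * 1) := by
          apply mul_le_mul_of_nonneg_left _ (by positivity)
          exact mul_le_mul_of_nonneg_left h2 h3
      _ = (4*c₀*C) * (1/2)^k := by ring
  have hgeom : Summable (fun k => (4*c₀*C) * (1/2:ℝ)^k) :=
    (summable_geometric_of_lt_one (by norm_num) (by norm_num)).mul_left _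
  have hsummable : Summable gQs := Summable.of_norm_bounded hgeom hgQbound
  set gQ : X := ∑' k, gQs k with hgQ_def
  clear_value gQ
  have htendsto : Tendsto (fun n => ∑ k ∈ Finset.range n, gQs k) atTop (𝓝 gQ) := by
    have h1 := hsummable.hasSum.tendsto_sum_nat
    rw [← hgQ_def] at h1
    exact h1
  have hnormsummable : Summable (fun k => ‖gQs k‖) :=
    Summable.of_nonneg_of_le (fun k => norm_nonneg _) hgQbound hgeom
  have hgQnorm : ‖gQ‖ ≤ 8*c₀*C := by
    rw [hgQ_def]
    calc ‖∑' k, gQs k‖ ≤ ∑' k, ‖gQs k‖ := norm_tsum_le_tsum_norm hnormsummable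
      _ ≤ ∑' k, (4*c₀*C) * (1/2:ℝ)^k := Summable.tsum_le_tsum hgQbound hnormsummable hgeom
      _ = (4*c₀*C) * ∑' k, (1/2:ℝ)^k := tsum_mul_left
      _ = (4*c₀*C) * 2 := by rw [tsum_geometric_of_lt_one (by norm_num) (by norm_num)]; norm_num
      _ = 8*c₀*C := by ring
  have hgQγ : ‖gQ‖ ≤ γ := by
    have hsqrt_eq : c₀ * Real.sqrt (ε/c₀) = Real.sqrt (c₀*ε) := by
      rw [show ε/c₀ = ε * c₀⁻¹ by ring, Real.sqrt_mul hε0, Real.sqrt_inv,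
        show c₀ * (Real.sqrt ε * (Real.sqrt c₀)⁻¹) = Real.sqrt ε * (c₀ / Real.sqrt c₀) by ring,
        Real.div_sqrt, mul_comm, ← Real.sqrt_mul hc₀0.le]
    have hc₀ε : c₀ * ε ≤ (γ/16)^2 := by
      have h1 : c₀ * ε ≤ γ^2/(256*(ε+1)) * ε := mul_le_mul_of_nonneg_right hc₀γ hε0
      have h2 : γ^2/(256*(ε+1)) * ε ≤ γ^2/256 := by
        rw [div_mul_eq_mul_div, div_le_div_iff₀ (by positivity) (by norm_num)]
        nlinarith [sq_nonneg γ]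
      calc c₀ * ε ≤ γ^2/256 := le_trans h1 h2
        _ = (γ/16)^2 := by ring
    have hsq : Real.sqrt (c₀*ε) ≤ γ/16 := by
      calc Real.sqrt (c₀*ε) ≤ Real.sqrt ((γ/16)^2) := Real.sqrt_le_sqrt hc₀ε
        _ = γ/16 := Real.sqrt_sq (by positivity)
    have h8C : 8*c₀*C = 8*(c₀*Real.sqrt (ε/c₀)) + 8*c₀*τ := by
      rw [hC_def]; ring
    have hc₀τ : 8*c₀*τ ≤ 8*τ := by nlinarith
    have : 8*c₀*C ≤ 8*(γ/16) + 8*τ := by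
      rw [h8C, hsqrt_eq]
      have := mul_le_mul_of_nonneg_left hsq (by norm_num : (0:ℝ) ≤ 8)
      linarith
    have hτγ : 8*τ = γ/2 := by rw [hτ_def]; ring
    calc ‖gQ‖ ≤ 8*c₀*C := hgQnorm
      _ ≤ 8*(γ/16) + 8*τ := this
      _ = γ := by rw [hτγ]; ring
  -- the proximal inequality
  set σ : ℝ := 1/(2*r) + κ/(2*β) + 2*c₀ with hσ_def
  clear_value σ
  have hσ0 : 0 < σ := by rw [hσ_def]; positivity
  set u : X := ‖z - y‖⁻¹ • (y - z) with hu_def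
  clear_value u
  have hΦeq : ∀ n w, Φ n w = f w + P w + ∑ k ∈ Finset.range n, c k * ‖w - zs k‖^2 := by
    intro n
    induction n with
    | zero => intro w; rw [hΦ0]; simp
    | succ n ih =>
      intro w
      rw [hΦrec n]
      dsimp only
      rw [ih w, Finset.sum_range_succ]
      ring
  have hcsum : ∀ n, ∑ k ∈ Finset.range n, c k ≤ 2*c₀ := by
    intro n
    have hgs : ∑ k ∈ Finset.range n, ((1:ℝ)/2)^k ≤ 2 := by
      have h1 : ∑ k ∈ Finset.range n, ((1:ℝ)/2)^k = (1 - (1/2)^n)/(1 - 1/2) := by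
        rw [geom_sum_eq (by norm_num)]
        rw [show ((1:ℝ)/2 - 1) = -(1 - 1/2) by ring, show ((1:ℝ)/2)^n - 1 = -(1 - (1/2)^n) by ring,
          neg_div_neg_eq]
      rw [h1]
      have h2 : (0:ℝ) ≤ (1/2:ℝ)^n := by positivity
      rw [div_le_iff₀ (by norm_num : (0:ℝ) < 1 - 1/2)]
      linarith
    calc ∑ k ∈ Finset.range n, c k = c₀ * ∑ k ∈ Finset.range n, ((1:ℝ)/2)^k := by
          rw [Finset.mul_sum]
          simp only [hc_def]
      _ ≤ c₀ * 2 := mul_le_mul_of_nonneg_left hgs hc₀0.le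
      _ = 2*c₀ := by ring
  have hkey : ∀ n, ∀ z' ∈ A,
      ⟪u - g₀ - (∑ k ∈ Finset.range n, gQs k), z' - z⟫_ℝ ≤ σ * ‖z' - z‖^2 + E n := by
    intro n z' hz'
    have hfz : f z = r := by rw [hf_def, hr_def]
    have hnorm_zy : ‖z - y‖ = r := by rw [hr_def]
    -- f expansion
    have hf1 : f z' ≤ f z + (r⁻¹ * ⟪z - y, z' - z⟫_ℝ + (1/(2*r)) * ‖z' - z‖^2) := by
      have h1 := norm_quad (z - y) (z' - z) (by rw [hnorm_zy]; exact hr0)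
      have heq : (z - y) + (z' - z) = z' - y := by abel
      rw [heq, hnorm_zy] at h1
      have h2 : (2*⟪z - y, z' - z⟫_ℝ + ‖z' - z‖^2)/(2*r)
          = r⁻¹ * ⟪z - y, z' - z⟫_ℝ + (1/(2*r)) * ‖z' - z‖^2 := by
        field_simp
      have h3 : f z' = ‖z' - y‖ := by rw [hf_def]
      rw [h3, hfz]
      linarith [h2 ▸ h1]
    -- P expansion
    have hP1 : P z' ≤ P z + ((κ/(G z)) * ⟪z - x, z' - z⟫_ℝ + (κ/(2*β)) * ‖z' - z‖^2) := by
      have h1 := sqrt_norm_quad (z - x) (z' - z) β hβ0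
      have heq : (z - x) + (z' - z) = z' - x := by abel
      rw [heq] at h1
      have hGz' : G z' = Real.sqrt (‖z' - x‖^2 + β^2) := by rw [hG_def]
      have hGzz : G z = Real.sqrt (‖z - x‖^2 + β^2) := by rw [hG_def]
      rw [← hGz', ← hGzz] at h1
      have hGpos := hG0 z
      have hGb := hGβ z
      -- multiply by κ and split
      have h2 : (2*⟪z - x, z' - z⟫_ℝ + ‖z' - z‖^2)/(2*(G z))
          = (1/(G z)) * ⟪z - x, z' - z⟫_ℝ + (1/(2*(G z))) * ‖z' - z‖^2 := by
        field_simp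
      have h3 : (1/(2*(G z))) * ‖z' - z‖^2 ≤ (1/(2*β)) * ‖z' - z‖^2 := by
        apply mul_le_mul_of_nonneg_right _ (by positivity)
        rw [div_le_div_iff₀ (by positivity) (by positivity)]
        linarith
      have h4 : G z' ≤ G z + ((1/(G z)) * ⟪z - x, z' - z⟫_ℝ + (1/(2*β)) * ‖z' - z‖^2) := by
        rw [h2] at h1
        linarith
      have h5 : P z' = κ * (G z' - β) := by rw [hP_def]
      have h6 : P z = κ * (G z - β) := by rw [hP_def]
      rw [h5, h6, mul_sub, mul_sub]
      have h7 := mul_le_mul_of_nonneg_left h4 hκ0.le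
      have h8 : κ * (G z + ((1/(G z)) * ⟪z - x, z' - z⟫_ℝ + (1/(2*β)) * ‖z' - z‖^2))
          = κ * G z + ((κ/(G z)) * ⟪z - x, z' - z⟫_ℝ + (κ/(2*β)) * ‖z' - z‖^2) := by
        field_simp
      linarith only [h7, h8]
    -- quadratic expansion
    have hquadsum : ∑ k ∈ Finset.range n, c k * ‖z' - zs k‖^2
        = ∑ k ∈ Finset.range n, c k * ‖z - zs k‖^2
          + ⟪∑ k ∈ Finset.range n, gQs k, z' - z⟫_ℝ
          + (∑ k ∈ Finset.range n, c k) * ‖z' - z‖^2 := by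
      rw [sum_inner, Finset.sum_mul, ← Finset.sum_add_distrib, ← Finset.sum_add_distrib]
      apply Finset.sum_congr rfl
      intro k _
      have heq : (z - zs k) + (z' - z) = z' - zs k := by abel
      have h1 := expand_sq (z - zs k) (z' - z)
      rw [heq] at h1
      have h2 : ⟪gQs k, z' - z⟫_ℝ = 2 * c k * ⟪z - zs k, z' - z⟫_ℝ := by
        rw [hgQs_def]
        dsimp only
        rw [real_inner_smul_left]
      rw [h1, h2]
      ring
    -- combine
    have hchn : (∑ k ∈ Finset.range n, c k) * ‖z' - z‖^2 ≤ 2*c₀ * ‖z' - z‖^2 :=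
      mul_le_mul_of_nonneg_right (hcsum n) (by positivity)
    have hΦineq : Φ n z' ≤ Φ n z + (r⁻¹ * ⟪z - y, z' - z⟫_ℝ + (κ/(G z)) * ⟪z - x, z' - z⟫_ℝ
        + ⟪∑ k ∈ Finset.range n, gQs k, z' - z⟫_ℝ) + σ * ‖z' - z‖^2 := by
      rw [hΦeq n z', hΦeq n z]
      have hσh : σ * ‖z' - z‖^2 = (1/(2*r)) * ‖z' - z‖^2 + (κ/(2*β)) * ‖z' - z‖^2
          + 2*c₀ * ‖z' - z‖^2 := by rw [hσ_def]; ring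
      rw [hquadsum, hσh]
      linarith only [hf1, hP1, hchn]
    have hm1 := hmin n z' hz'
    -- translate to the target inner product
    have hinner : ⟪u - g₀ - (∑ k ∈ Finset.range n, gQs k), z' - z⟫_ℝ
        = -(r⁻¹ * ⟪z - y, z' - z⟫_ℝ + (κ/(G z)) * ⟪z - x, z' - z⟫_ℝ
          + ⟪∑ k ∈ Finset.range n, gQs k, z' - z⟫_ℝ) := by
      rw [inner_sub_left, inner_sub_left, hu_def, hg₀_def]
      rw [real_inner_smul_left, real_inner_smul_left]
      have h1 : ⟪y - z, z' - z⟫_ℝ = -⟪z - y, z' - z⟫_ℝ := by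
        rw [← neg_sub z y, inner_neg_left]
      rw [h1, hnorm_zy]
      ring
    rw [hinner]
    linarith
  -- pass to the limit
  have hEtend : Tendsto E atTop (𝓝 0) := by
    have h8 : Tendsto (fun n => c₀ * τ^2 * (1/8:ℝ)^n) atTop (𝓝 (c₀ * τ^2 * 0)) :=
      (tendsto_pow_atTop_nhds_zero_of_lt_one (by norm_num) (by norm_num)).const_mul _
    rw [mul_zero] at h8
    apply h8.congr'
    filter_upwards [eventually_ge_atTop 1] with n hn
    rw [hE_def]
    dsimp only
    rw [if_neg (by omega)]
    ring
  have hfinal : ∀ z' ∈ A, ⟪u - g₀ - gQ, z' - z⟫_ℝ ≤ σ * ‖z' - z‖^2 := by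
    intro z' hz'
    have hL : Tendsto (fun n => ⟪u - g₀ - (∑ k ∈ Finset.range n, gQs k), z' - z⟫_ℝ)
        atTop (𝓝 ⟪u - g₀ - gQ, z' - z⟫_ℝ) :=
      Filter.Tendsto.inner (tendsto_const_nhds.sub htendsto) tendsto_const_nhds
    have hR : Tendsto (fun n => σ * ‖z' - z‖^2 + E n) atTop (𝓝 (σ * ‖z' - z‖^2)) := by
      have := tendsto_const_nhds (x := σ * ‖z' - z‖^2) (f := atTop (α := ℕ))
      have h2 := this.add hEtend
      rw [add_zero] at h2
      exact h2
    exact le_of_tendsto_of_tendsto' hL hR (fun n => hkey n z' hz')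
  have hv : u - g₀ - gQ ∈ proxCone A z := mem_proxCone_of_quad hzmem _ σ hσ0 hfinal
  have hDA : Metric.infDist u (proxCone A z) < α := by
    calc Metric.infDist u (proxCone A z) ≤ dist u (u - g₀ - gQ) :=
          Metric.infDist_le_dist_of_mem hv
      _ = ‖g₀ + gQ‖ := by rw [dist_eq_norm]; congr 1; abel
      _ ≤ ‖g₀‖ + ‖gQ‖ := norm_add_le _ _
      _ ≤ κ + γ := add_le_add hg₀norm hgQγ
      _ < α := by rw [hγ_def]; linarith
  have hDB : Metric.infDist (‖z - y‖⁻¹ • (z - y)) (proxCone B y) < α := by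
    apply distB_lt B x y z α hα0 hα1 hxy hzy hyproj
    rw [← hd_def]
    exact hq
  have hzball : z ∈ A ∩ Metric.ball x (α * ‖x - y‖) := by
    refine ⟨hzmem, ?_⟩
    rw [Metric.mem_ball, dist_eq_norm, ← hd_def]
    exact hq
  have hfinal2 := hcond z hzball hzB
  rw [← hu_def] at hfinal2
  have : max (Metric.infDist (‖z - y‖⁻¹ • (z - y)) (proxCone B y))
      (Metric.infDist u (proxCone A z)) < α := max_lt hDB hDA
  linarith

theorem stmt_6 (A B : Set X) (hA : IsClosed A) (hB : IsClosed B)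
    (x y : X) (hx : x ∈ A) (hxB : x ∉ B)
    (hy : y ∈ B) (hyproj : dist x y = Metric.infDist x B)
    (hyA : setDist A B < Metric.infDist y A)
    (α : ℝ) (hα : α ∈ Set.Ioo (0 : ℝ) 1) (δ : ℝ) (hδ : δ = α * ‖x - y‖)
    (hcond : ∀ z ∈ A ∩ Metric.ball x δ, z ∉ B →
      α ≤ max (Metric.infDist (‖z - y‖⁻¹ • (z - y)) (proxCone B y))
              (Metric.infDist (‖z - y‖⁻¹ • (y - z)) (proxCone A z))) :
    Metric.infDist y A ≤ (1 - α ^ 2) * ‖x - y‖ := by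
  subst hδ
  exact core A B hA x y hx hxB hy hyproj α hα.1 hα.2 hcond
end

section
/- Let A, B be closed subsets of a Hilbert space, x ∈ A, y ∈ P_B(x) with x ≠ y, and α ∈ (0,1). Then for every z ∈ A with ‖z−x‖ < α‖x−y‖ and z ≠ y, one has d((z−y)/‖z−y‖, N_B(y)) < α. -/
open Metric
open scoped InnerProductSpace

variable {X : Type*} [NormedAddCommGroup X] [InnerProductSpace ℝ X] [CompleteSpace X]

theorem stmt_8 (A B : Set X) (hA : IsClosed A) (hB : IsClosed B)
    (x y : X) (hx : x ∈ A) (hy : y ∈ B) (hyproj : dist x y = Metric.infDist x B)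
    (hxy : x ≠ y) (α : ℝ) (hα : α ∈ Set.Ioo (0 : ℝ) 1) :
    ∀ z ∈ A, ‖z - x‖ < α * ‖x - y‖ → z ≠ y →
      Metric.infDist (‖z - y‖⁻¹ • (z - y)) (proxCone B y) < α := by
  intro z hz hzx hzy
  obtain ⟨hα0, hα1⟩ := hα
  have hxy0 : (0:ℝ) < ‖x - y‖ := by simpa [sub_eq_zero] using hxy
  have hzy0 : (0:ℝ) < ‖z - y‖ := by simpa [sub_eq_zero] using hzy
  set a : X := ‖z - y‖⁻¹ • (z - y) with ha
  set b : X := ‖x - y‖⁻¹ • (x - y) with hb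
  have hna : ‖a‖ = 1 := by rw [ha, norm_smul, norm_inv, norm_norm, inv_mul_cancel₀ (ne_of_gt hzy0)]
  have hnb : ‖b‖ = 1 := by rw [hb, norm_smul, norm_inv, norm_norm, inv_mul_cancel₀ (ne_of_gt hxy0)]
  set t : ℝ := ⟪a, b⟫_ℝ with ht
  set s : ℝ := ‖z - y‖ / ‖x - y‖ with hs
  have hs0 : 0 < s := div_pos hzy0 hxy0
  -- ‖b - s • a‖ = ‖x - z‖ / ‖x - y‖ < α
  have key : b - s • a = ‖x - y‖⁻¹ • (x - z) := by
    rw [hb, ha, hs, smul_smul]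
    rw [div_mul_eq_mul_div, mul_inv_cancel₀ (ne_of_gt hzy0)]
    rw [div_eq_mul_inv, one_mul, ← smul_sub]
    congr 1
    abel
  have hbsa : ‖b - s • a‖ < α := by
    rw [key, norm_smul, norm_inv, norm_norm]
    rw [inv_mul_lt_iff₀ hxy0, mul_comm]
    calc ‖x - z‖ = ‖z - x‖ := by rw [norm_sub_rev]
    _ < α * ‖x - y‖ := hzx
  have hsq : 1 - 2 * s * t + s ^ 2 < α ^ 2 := by
    have expand : ‖b - s • a‖ ^ 2 = 1 - 2 * s * t + s ^ 2 := by
      have htc : ⟪b, a⟫_ℝ = t := by rw [real_inner_comm]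
      rw [@norm_sub_sq_real, hnb, real_inner_smul_right, htc,
        norm_smul, hna, Real.norm_eq_abs, abs_of_pos hs0]
      ring
    calc 1 - 2 * s * t + s ^ 2 = ‖b - s • a‖ ^ 2 := expand.symm
    _ < α ^ 2 := by
        apply sq_lt_sq' _ hbsa
        linarith [norm_nonneg (b - s • a)]
  have ht0 : 0 < t := by nlinarith [sq_nonneg s]
  -- ‖a - t • b‖² = 1 - t² ≤ 1 - 2st + s² < α²
  have hatb : ‖a - t • b‖ < α := by
    have expand : ‖a - t • b‖ ^ 2 = 1 - t ^ 2 := by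
      rw [@norm_sub_sq_real, hna, real_inner_smul_right, ← ht,
        norm_smul, hnb, Real.norm_eq_abs, abs_of_pos ht0]
      ring
    have h1 : ‖a - t • b‖ ^ 2 < α ^ 2 := by
      rw [expand]; nlinarith [sq_nonneg (s - t)]
    nlinarith [norm_nonneg (a - t • b)]
  have hmem : t • b ∈ proxCone B y := by
    refine ⟨t * ‖x - y‖⁻¹, x, ?_, hyproj, ?_⟩
    · positivity
    · rw [hb, smul_smul]
  calc Metric.infDist a (proxCone B y) ≤ dist a (t • b) :=
        Metric.infDist_le_dist_of_mem hmem
  _ = ‖a - t • b‖ := by rw [dist_eq_norm]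
  _ < α := hatb
end

section
/- In ℝ², let A = {(u,v) : v ≤ 0} and B = {(u,v) : v ≥ |u|}. Then for all x ∈ A\B and y ∈ B\A, max{ d((x−y)/‖x−y‖, N_B(y)), d((y−x)/‖x−y‖, N_A(x)) } ≥ 1/(2√2), where N_A and N_B denote the proximal normal cones. -/
open Metric
open scoped InnerProductSpace

variable {X : Type*} [NormedAddCommGroup X] [InnerProductSpace ℝ X] [CompleteSpace X]

lemma proxCone_inner_le {A : Set X} (hAc : Convex ℝ A) {x : X} (hx : x ∈ A)
    {v : X} (hv : v ∈ proxCone A x) {a : X} (ha : a ∈ A) : ⟪v, a - x⟫_ℝ ≤ 0 := by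
  obtain ⟨l, z, hl, hz, rfl⟩ := hv
  rw [real_inner_smul_left]
  have key : ⟪z - x, a - x⟫_ℝ ≤ 0 := by
    have hnorm : ‖z - x‖ = ⨅ w : A, ‖z - w‖ := by
      rw [← dist_eq_norm, hz, Metric.infDist_eq_iInf]
      congr 1; ext w; rw [dist_eq_norm]
    exact (norm_eq_iInf_iff_real_inner_le_zero hAc hx).1 hnorm a ha
  exact mul_nonpos_iff.2 (Or.inl ⟨hl, key⟩)

omit [CompleteSpace X] in
lemma zero_mem_proxCone {A : Set X} {x : X} (hx : x ∈ A) : (0:X) ∈ proxCone A x :=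
  ⟨0, x, le_refl _, by rw [dist_self, Metric.infDist_zero_of_mem hx], by simp⟩

lemma le_infDist' {α : Type*} [PseudoMetricSpace α] {s : Set α} (hs : s.Nonempty) {x : α} {b : ℝ}
    (h : ∀ y ∈ s, b ≤ dist x y) : b ≤ Metric.infDist x s := by
  by_contra hc
  push_neg at hc
  obtain ⟨y, hy, hlt⟩ := (Metric.infDist_lt_iff hs).1 hc
  exact absurd (h y hy) (not_le.2 hlt)

lemma dist_coord (u v : EuclideanSpace ℝ (Fin 2)) :
    dist u v = Real.sqrt ((u 0 - v 0)^2 + (u 1 - v 1)^2) := by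
  rw [EuclideanSpace.dist_eq, Fin.sum_univ_two]
  simp [Real.dist_eq, sq_abs]

lemma abs_le_sqrt_aux (s t : ℝ) : |s| ≤ Real.sqrt (s^2 + t^2) := by
  rw [← Real.sqrt_sq_eq_abs]
  exact Real.sqrt_le_sqrt (by nlinarith [sq_nonneg t])

lemma abs_add_le_sqrt_aux (s t : ℝ) : |s + t| / Real.sqrt 2 ≤ Real.sqrt (s^2 + t^2) := by
  have h2 : (0:ℝ) < Real.sqrt 2 := Real.sqrt_pos.2 two_pos
  rw [div_le_iff₀ h2, ← Real.sqrt_mul (by positivity), ← Real.sqrt_sq_eq_abs]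
  exact Real.sqrt_le_sqrt (by nlinarith [sq_nonneg (s - t)])

lemma abs_sub_le_sqrt_aux (s t : ℝ) : |s - t| / Real.sqrt 2 ≤ Real.sqrt (s^2 + t^2) := by
  have := abs_add_le_sqrt_aux s (-t)
  simpa [sub_eq_add_neg] using this

set_option maxHeartbeats 2000000 in
theorem stmt_12
    (A B : Set (EuclideanSpace ℝ (Fin 2)))
    (hA : A = {p | p 1 ≤ 0}) (hB : B = {p | |p 0| ≤ p 1}) :
    ∀ x ∈ A, x ∉ B → ∀ y ∈ B, y ∉ A →
      1 / (2 * Real.sqrt 2) ≤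
        max (Metric.infDist (‖x - y‖⁻¹ • (x - y)) (proxCone B y))
            (Metric.infDist (‖x - y‖⁻¹ • (y - x)) (proxCone A x)) := by
  intro x hx hxB y hy hyA
  have s2pos : (0:ℝ) < Real.sqrt 2 := Real.sqrt_pos.2 two_pos
  have s2sq : Real.sqrt 2 ^ 2 = 2 := Real.sq_sqrt (by norm_num)
  have s2ge1 : (1:ℝ) ≤ Real.sqrt 2 := by nlinarith
  have hAc : Convex ℝ A := by
    rw [hA]; intro u hu w hw a b ha hb hab
    simp only [Set.mem_setOf_eq, PiLp.add_apply, PiLp.smul_apply, smul_eq_mul] at *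
    nlinarith
  have hBc : Convex ℝ B := by
    rw [hB]; intro u hu w hw a b ha hb hab
    simp only [Set.mem_setOf_eq, PiLp.add_apply, PiLp.smul_apply, smul_eq_mul] at *
    calc |a * u 0 + b * w 0| ≤ |a * u 0| + |b * w 0| := abs_add_le _ _
      _ = a * |u 0| + b * |w 0| := by
          rw [abs_mul, abs_mul, abs_of_nonneg ha, abs_of_nonneg hb]
      _ ≤ a * u 1 + b * w 1 := by
          gcongr
  have hx1 : x 1 ≤ 0 := by rw [hA] at hx; exact hx
  have hyB : |y 0| ≤ y 1 := by rw [hB] at hy; exact hy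
  have hy1 : 0 < y 1 := by rw [hA] at hyA; exact lt_of_not_ge hyA
  have hxy : x ≠ y := by
    intro h; rw [h] at hx1; linarith
  have hrpos : 0 < ‖x - y‖ := by
    rw [norm_sub_pos_iff]; exact hxy
  set r : ℝ := ‖x - y‖ with hrdef
  have hr2 : r^2 = (x 0 - y 0)^2 + (x 1 - y 1)^2 := by
    rw [hrdef, EuclideanSpace.norm_eq, Fin.sum_univ_two,
      Real.sq_sqrt (by positivity)]
    simp [sq_abs]
  set p : ℝ := x 0 - y 0 with hpdef
  set q : ℝ := x 1 - y 1 with hqdef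
  -- the two points whose distance to the cones we bound
  set W1 : EuclideanSpace ℝ (Fin 2) := ‖x - y‖⁻¹ • (x - y) with hW1
  set W2 : EuclideanSpace ℝ (Fin 2) := ‖x - y‖⁻¹ • (y - x) with hW2
  have hW1c : ∀ i, W1 i = r⁻¹ * (x i - y i) := by
    intro i; rw [hW1]; simp [PiLp.smul_apply, PiLp.sub_apply]; exact Or.inl hrdef.symm
  have hW2c : ∀ i, W2 i = r⁻¹ * (y i - x i) := by
    intro i; rw [hW2]; simp [PiLp.smul_apply, PiLp.sub_apply]; exact Or.inl hrdef.symm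
  have hW1norm : ‖W1‖ = 1 := by
    rw [hW1, norm_smul, norm_inv, norm_norm, ← hrdef, inv_mul_cancel₀ (ne_of_gt hrpos)]
  have hW2norm : ‖W2‖ = 1 := by
    rw [hW2, norm_smul, norm_inv, norm_norm, ← hrdef, norm_sub_rev, ← hrdef,
      inv_mul_cancel₀ (ne_of_gt hrpos)]
  have hc1 : 1 / (2 * Real.sqrt 2) ≤ 1 := by
    rw [div_le_one (by positivity)]; linarith
  -- inner products with singles
  have hins : ∀ (v : EuclideanSpace ℝ (Fin 2)) (i : Fin 2) (c : ℝ),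
      ⟪v, EuclideanSpace.single i c⟫_ℝ = c * v i := by
    intro v i c; rw [EuclideanSpace.inner_single_right]; simp
  have hinco : ∀ (v w : EuclideanSpace ℝ (Fin 2)),
      ⟪v, w⟫_ℝ = v 0 * w 0 + v 1 * w 1 := by
    intro v w
    simp [PiLp.inner_apply, Fin.sum_univ_two, RCLike.inner_apply, conj_trivial]; ring
  -- facts about proxCone A x
  have hvA0 : ∀ v ∈ proxCone A x, v 0 = 0 := by
    intro v hv
    have h1 : ⟪v, (x + EuclideanSpace.single 0 (1:ℝ)) - x⟫_ℝ ≤ 0 := by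
      apply proxCone_inner_le hAc hx hv
      rw [hA]
      simp only [Set.mem_setOf_eq, PiLp.add_apply, EuclideanSpace.single_apply]
      norm_num; exact hx1
    have h2 : ⟪v, (x + EuclideanSpace.single 0 (-1:ℝ)) - x⟫_ℝ ≤ 0 := by
      apply proxCone_inner_le hAc hx hv
      rw [hA]
      simp only [Set.mem_setOf_eq, PiLp.add_apply, EuclideanSpace.single_apply]
      norm_num; exact hx1
    rw [add_sub_cancel_left, hins] at h1 h2
    linarith
  have hvA1 : ∀ v ∈ proxCone A x, 0 ≤ v 1 := by
    intro v hv
    have h2 : ⟪v, (x + EuclideanSpace.single 1 (-1:ℝ)) - x⟫_ℝ ≤ 0 := by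
      apply proxCone_inner_le hAc hx hv
      rw [hA]
      simp only [Set.mem_setOf_eq, PiLp.add_apply, EuclideanSpace.single_apply]
      norm_num; linarith
    rw [add_sub_cancel_left, hins] at h2
    linarith
  -- facts about proxCone B y
  have hvBsum : ∀ v ∈ proxCone B y, v 0 + v 1 ≤ 0 := by
    intro v hv
    have h1 : ⟪v, (y + (EuclideanSpace.single 0 (1:ℝ) + EuclideanSpace.single 1 (1:ℝ))) - y⟫_ℝ ≤ 0 := by
      apply proxCone_inner_le hBc hy hv
      rw [hB]
      simp only [Set.mem_setOf_eq, PiLp.add_apply, EuclideanSpace.single_apply]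
      norm_num
      calc |y 0 + 1| ≤ |y 0| + 1 := by
            calc |y 0 + 1| ≤ |y 0| + |(1:ℝ)| := abs_add_le _ _
              _ = |y 0| + 1 := by norm_num
        _ ≤ y 1 + 1 := by linarith
    rw [add_sub_cancel_left, inner_add_right, hins, hins] at h1
    linarith
  have hvBdif : ∀ v ∈ proxCone B y, -(v 0) + v 1 ≤ 0 := by
    intro v hv
    have h1 : ⟪v, (y + (EuclideanSpace.single 1 (1:ℝ) - EuclideanSpace.single 0 (1:ℝ))) - y⟫_ℝ ≤ 0 := by
      apply proxCone_inner_le hBc hy hv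
      rw [hB]
      simp only [Set.mem_setOf_eq, PiLp.add_apply, PiLp.sub_apply, EuclideanSpace.single_apply]
      norm_num
      calc |y 0 - 1| ≤ |y 0| + |(1:ℝ)| := abs_sub _ _
        _ = |y 0| + 1 := by norm_num
        _ ≤ y 1 + 1 := by linarith
    rw [add_sub_cancel_left, inner_sub_right, hins, hins] at h1
    linarith
  have hvBorth : ∀ v ∈ proxCone B y, v 0 * y 0 + v 1 * y 1 = 0 := by
    intro v hv
    have h1 : ⟪v, (0:EuclideanSpace ℝ (Fin 2)) - y⟫_ℝ ≤ 0 := by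
      apply proxCone_inner_le hBc hy hv
      rw [hB]
      simp
    have h2 : ⟪v, ((2:ℝ) • y) - y⟫_ℝ ≤ 0 := by
      apply proxCone_inner_le hBc hy hv
      rw [hB]
      simp only [Set.mem_setOf_eq, PiLp.smul_apply, smul_eq_mul]
      rw [abs_mul]
      norm_num
      linarith [abs_nonneg (y 0)]
    rw [zero_sub, inner_neg_right] at h1
    have h2' : ((2:ℝ) • y) - y = y := by
      rw [two_smul]; abel
    rw [h2', hinco] at h2
    rw [hinco] at h1
    linarith
  -- nonemptiness
  have hneA : (proxCone A x).Nonempty := ⟨0, zero_mem_proxCone hx⟩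
  have hneB : (proxCone B y).Nonempty := ⟨0, zero_mem_proxCone hy⟩
  rcases lt_or_eq_of_le hx1 with hx1lt | hx1eq
  · -- Case I : x is in the interior of A, the cone at x is {0}
    apply le_max_of_le_right
    apply le_infDist' hneA
    intro v hv
    have hv1le : v 1 ≤ 0 := by
      have h2 : ⟪v, (x + EuclideanSpace.single 1 (-(x 1))) - x⟫_ℝ ≤ 0 := by
        apply proxCone_inner_le hAc hx hv
        rw [hA]
        simp only [Set.mem_setOf_eq, PiLp.add_apply, EuclideanSpace.single_apply]
        norm_num
      rw [add_sub_cancel_left, hins] at h2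
      nlinarith [hvA1 v hv]
    have hv0 := hvA0 v hv
    have hv1 : v 1 = 0 := le_antisymm hv1le (hvA1 v hv)
    have hv' : v = 0 := by
      ext i
      fin_cases i
      · simpa using hv0
      · simpa using hv1
    rw [hv', dist_zero_right, hW2norm]
    exact hc1
  · -- Case II : x 1 = 0
    rcases lt_or_eq_of_le hyB with hyblt | hybeq
    · -- y is interior to B : cone at y is {0}
      apply le_max_of_le_left
      apply le_infDist' hneB
      intro v hv
      have hsum := hvBsum v hv
      have hdif := hvBdif v hv
      have horth := hvBorth v hv
      have habs : |v 0| ≤ -(v 1) := abs_le.2 ⟨by linarith, by linarith⟩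
      have hmul : v 0 * y 0 ≤ |v 0| * |y 0| := by
        rw [← abs_mul]; exact le_abs_self _
      have hv1 : 0 ≤ v 1 := by
        by_contra hcon
        push_neg at hcon
        have f1 : |v 0| * |y 0| ≤ (-(v 1)) * |y 0| :=
          mul_le_mul_of_nonneg_right habs (abs_nonneg _)
        have f2 : (-(v 1)) * |y 0| < (-(v 1)) * y 1 :=
          mul_lt_mul_of_pos_left hyblt (by linarith)
        linarith
      have hv1' : v 1 = 0 := le_antisymm (by linarith) hv1
      have hv0 : v 0 = 0 := le_antisymm (by linarith) (by linarith)
      have hv' : v = 0 := by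
        ext i
        fin_cases i
        · simpa using hv0
        · simpa using hv1'
      rw [hv', dist_zero_right, hW1norm]
      exact hc1
    · -- y is on the boundary of B : |y 0| = y 1 > 0
      have hy0ne : y 0 ≠ 0 := by
        intro h; rw [h] at hybeq; simp at hybeq; linarith
      have hq : q = -(y 1) := by rw [hqdef, hx1eq]; ring
      by_cases hcase : r ≤ 2 * Real.sqrt 2 * |p|
      · -- use the A-side distance
        apply le_max_of_le_right
        apply le_infDist' hneA
        intro v hv
        have hv0 := hvA0 v hv
        have key : 1 / (2 * Real.sqrt 2) ≤ |p| / r := by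
          rw [div_le_div_iff₀ (by positivity) hrpos]
          linarith
        calc 1 / (2 * Real.sqrt 2) ≤ |p| / r := key
          _ = |W2 0 - v 0| := by
              rw [hv0, sub_zero, hW2c, abs_mul, abs_inv, abs_of_pos hrpos]
              rw [show y 0 - x 0 = -p by rw [hpdef]; ring, abs_neg]
              ring
          _ ≤ dist W2 v := by
              rw [dist_coord]
              exact abs_le_sqrt_aux _ _
      · -- use the B-side distance
        push_neg at hcase
        have h7p2 : (y 1)^2 > 7 * p^2 := by
          have habs8 : (2 * Real.sqrt 2 * |p|)^2 = 8 * p^2 := by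
            rw [mul_pow, mul_pow, s2sq, sq_abs]; ring
          have hsq := mul_self_lt_mul_self (by positivity : (0:ℝ) ≤ 2 * Real.sqrt 2 * |p|) hcase
          have h8 : 8 * p^2 < r^2 := by nlinarith [hsq, habs8]
          have hq2 : q^2 = (y 1)^2 := by rw [hq]; ring
          rw [hr2] at h8
          linarith
        rcases abs_cases (y 0) with ⟨hsg, _⟩ | ⟨hsg, _⟩
        · -- y 0 > 0, y 0 = y 1
          have hy0 : y 0 = y 1 := by rw [← hybeq, hsg]
          apply le_max_of_le_left
          apply le_infDist' hneB
          intro v hv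
          have hline : v 0 + v 1 = 0 := by
            have horth := hvBorth v hv
            have : y 0 * (v 0 + v 1) = 0 := by rw [hy0] at horth ⊢; linarith
            rcases mul_eq_zero.1 this with h | h
            · exact absurd h hy0ne
            · exact h
          have hbig : r ≤ 2 * |p + q| := by
            have hgoal : r^2 ≤ 4 * (p + q)^2 := by
              rw [hr2, hq]
              nlinarith [sq_nonneg (3*p - y 1), sq_nonneg (p - y 1), h7p2, hy1]
            nlinarith [abs_nonneg (p + q), sq_abs (p + q), hrpos]
          have key : 1 / (2 * Real.sqrt 2) ≤ (|p + q| / r) / Real.sqrt 2 := by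
            have h12 : (1:ℝ) / 2 ≤ |p + q| / r := by
              rw [div_le_div_iff₀ two_pos hrpos]; linarith
            calc 1 / (2 * Real.sqrt 2) = (1/2) / Real.sqrt 2 := by ring
              _ ≤ (|p + q| / r) / Real.sqrt 2 := by
                  exact (div_le_div_iff_of_pos_right s2pos).2 h12
          calc 1 / (2 * Real.sqrt 2) ≤ (|p + q| / r) / Real.sqrt 2 := key
            _ = |(W1 0 - v 0) + (W1 1 - v 1)| / Real.sqrt 2 := by
                congr 1
                rw [hW1c, hW1c, ← hpdef, ← hqdef]
                rw [show r⁻¹ * p - v 0 + (r⁻¹ * q - v 1) = r⁻¹ * (p + q) - (v 0 + v 1) by ring,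
                  hline, sub_zero, abs_mul, abs_inv, abs_of_pos hrpos]
                ring
            _ ≤ dist W1 v := by
                rw [dist_coord]
                exact abs_add_le_sqrt_aux _ _
        · -- y 0 < 0, -(y 0) = y 1
          have hy0 : y 0 = -(y 1) := by rw [← hybeq, hsg]; ring
          apply le_max_of_le_left
          apply le_infDist' hneB
          intro v hv
          have hline : v 0 - v 1 = 0 := by
            have horth := hvBorth v hv
            have : y 0 * (v 0 - v 1) = 0 := by
              rw [hy0] at horth ⊢; ring_nf; ring_nf at horth; linarith
            rcases mul_eq_zero.1 this with h | h
            · exact absurd h hy0ne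
            · exact h
          have hbig : r ≤ 2 * |p - q| := by
            have hgoal : r^2 ≤ 4 * (p - q)^2 := by
              rw [hr2, hq]
              nlinarith [sq_nonneg (3*p + y 1), sq_nonneg (p + y 1), h7p2, hy1]
            nlinarith [abs_nonneg (p - q), sq_abs (p - q), hrpos]
          have key : 1 / (2 * Real.sqrt 2) ≤ (|p - q| / r) / Real.sqrt 2 := by
            have h12 : (1:ℝ) / 2 ≤ |p - q| / r := by
              rw [div_le_div_iff₀ two_pos hrpos]; linarith
            calc 1 / (2 * Real.sqrt 2) = (1/2) / Real.sqrt 2 := by ring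
              _ ≤ (|p - q| / r) / Real.sqrt 2 := (div_le_div_iff_of_pos_right s2pos).2 h12
          calc 1 / (2 * Real.sqrt 2) ≤ (|p - q| / r) / Real.sqrt 2 := key
            _ = |(W1 0 - v 0) - (W1 1 - v 1)| / Real.sqrt 2 := by
                congr 1
                rw [hW1c, hW1c, ← hpdef, ← hqdef]
                rw [show r⁻¹ * p - v 0 - (r⁻¹ * q - v 1) = r⁻¹ * (p - q) - (v 0 - v 1) by ring,
                  hline, sub_zero, abs_mul, abs_inv, abs_of_pos hrpos]
                ring
            _ ≤ dist W1 v := by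
                rw [dist_coord]
                exact abs_sub_le_sqrt_aux _ _
end

section
/- In ℝ², let A = {(x,y) : y ≤ 0} and B = {(x,y) : y ≥ x²}, and define a_n = (1/n, 0) ∈ A, b_n = (1/n, 1/n²) ∈ B. Then max{ d((b_n−a_n)/‖a_n−b_n‖, N_A(a_n)), d((a_n−b_n)/‖a_n−b_n‖, N_B(b_n)) } ≤ 2/n for all n ≥ 1; in particular this maximum tends to 0, so no constant α ∈ (0,1) can satisfy the intrinsic transversality inequality for all such pairs. -/
open Metric
open scoped InnerProductSpace

variable {X : Type*} [NormedAddCommGroup X] [InnerProductSpace ℝ X] [CompleteSpace X]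

private lemma le_infDist_aux {α : Type*} [MetricSpace α] {x : α} {s : Set α} {r : ℝ}
    (hs : s.Nonempty) (h : ∀ y ∈ s, r ≤ dist x y) : r ≤ Metric.infDist x s := by
  by_contra hlt
  push_neg at hlt
  obtain ⟨y, hy, hd⟩ := (Metric.infDist_lt_iff hs).1 hlt
  exact absurd (h y hy) (not_le.2 hd)

private lemma e_sub (x y x' y' : ℝ) :
    ((WithLp.equiv 2 (Fin 2 → ℝ)).symm ![x, y] : EuclideanSpace ℝ (Fin 2)) -
      (WithLp.equiv 2 (Fin 2 → ℝ)).symm ![x', y'] =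
      (WithLp.equiv 2 (Fin 2 → ℝ)).symm ![x - x', y - y'] := by
  ext i; fin_cases i <;> simp

private lemma e_smul (r x y : ℝ) :
    r • ((WithLp.equiv 2 (Fin 2 → ℝ)).symm ![x, y] : EuclideanSpace ℝ (Fin 2)) =
      (WithLp.equiv 2 (Fin 2 → ℝ)).symm ![r * x, r * y] := by
  ext i; fin_cases i <;> simp

private lemma e_eq (x y x' y' : ℝ) (hx : x = x') (hy : y = y') :
    ((WithLp.equiv 2 (Fin 2 → ℝ)).symm ![x, y] : EuclideanSpace ℝ (Fin 2)) =
      (WithLp.equiv 2 (Fin 2 → ℝ)).symm ![x', y'] := by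
  rw [hx, hy]

private lemma e_norm (x y : ℝ) :
    ‖((WithLp.equiv 2 (Fin 2 → ℝ)).symm ![x, y] : EuclideanSpace ℝ (Fin 2))‖ =
      Real.sqrt (x ^ 2 + y ^ 2) := by
  rw [EuclideanSpace.norm_eq]
  simp [Fin.sum_univ_two]

private lemma e_dist (p q : EuclideanSpace ℝ (Fin 2)) :
    dist p q = Real.sqrt ((p 0 - q 0) ^ 2 + (p 1 - q 1) ^ 2) := by
  rw [EuclideanSpace.dist_eq]
  simp [Fin.sum_univ_two, Real.dist_eq, sq_abs]

private lemma e_apply0 (x y : ℝ) :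
    ((WithLp.equiv 2 (Fin 2 → ℝ)).symm ![x, y] : EuclideanSpace ℝ (Fin 2)) 0 = x := by simp

private lemma e_apply1 (x y : ℝ) :
    ((WithLp.equiv 2 (Fin 2 → ℝ)).symm ![x, y] : EuclideanSpace ℝ (Fin 2)) 1 = y := by simp

/-- Arithmetic fact for the half-plane: a point with second coordinate `≤ 0` is at squared
distance at least `1` from `(t, 1)`. -/
private lemma halfplane_ineq (t s u : ℝ) (hs : s ≤ 0) : 1 ≤ (t - u) ^ 2 + (1 - s) ^ 2 := by
  nlinarith [sq_nonneg (t - u)]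

/-- Arithmetic fact for the parabola: if `x ^ 2 ≤ s` then `(x, s)` is at squared distance at
least `4c⁶ + c⁴` from the point `(c + 2c³, 0)` on the proximal normal at `(c, c²)`. -/
private lemma parabola_ineq (c x s : ℝ) (hx : x ^ 2 ≤ s) :
    4 * c ^ 6 + c ^ 4 ≤ (x - (c + 2 * c ^ 3)) ^ 2 + s ^ 2 := by
  have hs0 : 0 ≤ s := le_trans (sq_nonneg _) hx
  nlinarith [sq_nonneg (x - c), mul_nonneg (sq_nonneg (x - c)) (sq_nonneg c),
    sq_nonneg ((x - c) * (x + c)),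
    mul_nonneg (sub_nonneg.2 hx) (by nlinarith : (0:ℝ) ≤ s + x ^ 2)]

set_option maxHeartbeats 1000000 in
theorem stmt_13
    (A B : Set (EuclideanSpace ℝ (Fin 2)))
    (hA : A = {p | p 1 ≤ 0}) (hB : B = {p | (p 0) ^ 2 ≤ p 1})
    (a b : ℕ → EuclideanSpace ℝ (Fin 2))
    (ha : ∀ n : ℕ, a n = (WithLp.equiv 2 (Fin 2 → ℝ)).symm ![1 / (n : ℝ), 0])
    (hb : ∀ n : ℕ, b n = (WithLp.equiv 2 (Fin 2 → ℝ)).symm ![1 / (n : ℝ), 1 / (n : ℝ) ^ 2]) :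
    (∀ n : ℕ, 1 ≤ n →
      max (Metric.infDist (‖a n - b n‖⁻¹ • (b n - a n)) (proxCone A (a n)))
          (Metric.infDist (‖a n - b n‖⁻¹ • (a n - b n)) (proxCone B (b n))) ≤ 2 / (n : ℝ)) ∧
    ¬ ∃ α ∈ Set.Ioo (0 : ℝ) 1, ∀ n : ℕ, 1 ≤ n →
      α ≤ max (Metric.infDist (‖a n - b n‖⁻¹ • (b n - a n)) (proxCone A (a n)))
              (Metric.infDist (‖a n - b n‖⁻¹ • (a n - b n)) (proxCone B (b n))) := by
  have key : ∀ n : ℕ, 1 ≤ n →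
      max (Metric.infDist (‖a n - b n‖⁻¹ • (b n - a n)) (proxCone A (a n)))
          (Metric.infDist (‖a n - b n‖⁻¹ • (a n - b n)) (proxCone B (b n))) ≤ 2 / (n : ℝ) := by
    intro n hn
    have hN : (1 : ℝ) ≤ (n : ℝ) := by exact_mod_cast hn
    have hN0 : (0 : ℝ) < (n : ℝ) := lt_of_lt_of_le one_pos hN
    set N : ℝ := (n : ℝ) with hNdef
    have hNne : N ≠ 0 := ne_of_gt hN0
    -- basic vector computations
    have hab : a n - b n = (WithLp.equiv 2 (Fin 2 → ℝ)).symm ![0, -(1 / N ^ 2)] := by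
      rw [ha, hb, e_sub]
      exact e_eq _ _ _ _ (by ring) (by ring)
    have hba : b n - a n = (WithLp.equiv 2 (Fin 2 → ℝ)).symm ![0, 1 / N ^ 2] := by
      rw [hb, ha, e_sub]
      exact e_eq _ _ _ _ (by ring) (by ring)
    have hnorm : ‖a n - b n‖ = 1 / N ^ 2 := by
      rw [hab, e_norm]
      rw [show (0:ℝ) ^ 2 + (-(1 / N ^ 2)) ^ 2 = (1 / N ^ 2) ^ 2 by ring]
      exact Real.sqrt_sq (by positivity)
    have hninv : ‖a n - b n‖⁻¹ = N ^ 2 := by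
      rw [hnorm]; field_simp
    have hv1 : ‖a n - b n‖⁻¹ • (b n - a n) =
        (WithLp.equiv 2 (Fin 2 → ℝ)).symm ![0, 1] := by
      rw [hninv, hba, e_smul]
      exact e_eq _ _ _ _ (by ring) (by field_simp)
    have hv2 : ‖a n - b n‖⁻¹ • (a n - b n) =
        (WithLp.equiv 2 (Fin 2 → ℝ)).symm ![0, -1] := by
      rw [hninv, hab, e_smul]
      exact e_eq _ _ _ _ (by ring) (by field_simp)
    -- A part : the unit vector (0,1) lies in the proximal cone of A at a n
    have haA : a n ∈ A := by rw [hA, ha]; simp [Set.mem_setOf_eq]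
    have hmemA : ((WithLp.equiv 2 (Fin 2 → ℝ)).symm ![0, 1] : EuclideanSpace ℝ (Fin 2)) ∈
        proxCone A (a n) := by
      refine ⟨1, (WithLp.equiv 2 (Fin 2 → ℝ)).symm ![1 / N, 1], zero_le_one, ?_, ?_⟩
      · have hdya : dist ((WithLp.equiv 2 (Fin 2 → ℝ)).symm ![1 / N, 1] :
            EuclideanSpace ℝ (Fin 2)) (a n) = 1 := by
          rw [ha, e_dist, e_apply0, e_apply0, e_apply1, e_apply1]
          norm_num [hNdef]
        rw [hdya]
        refine le_antisymm ?_ ?_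
        · refine le_infDist_aux ⟨a n, haA⟩ ?_
          intro p hp
          rw [hA] at hp
          rw [e_dist, e_apply0, e_apply1]
          exact Real.le_sqrt_of_sq_le (by

            simpa using halfplane_ineq (1 / N) (p 1) (p 0) hp)
        · calc Metric.infDist _ A ≤ dist ((WithLp.equiv 2 (Fin 2 → ℝ)).symm ![1 / N, 1] :
              EuclideanSpace ℝ (Fin 2)) (a n) := Metric.infDist_le_dist_of_mem haA
            _ = 1 := hdya
      · rw [ha, e_sub, one_smul]
        exact e_eq _ _ _ _ (by ring) (by ring)
    have hdA : Metric.infDist (‖a n - b n‖⁻¹ • (b n - a n)) (proxCone A (a n)) = 0 := by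
      rw [hv1]; exact Metric.infDist_zero_of_mem hmemA
    -- B part : the vector (2/N, -1) lies in the proximal cone of B at b n
    have hbB : b n ∈ B := by
      rw [hB, hb]
      simp only [Set.mem_setOf_eq, e_apply0, e_apply1]
      rw [div_pow]; norm_num
    have hmemB : ((WithLp.equiv 2 (Fin 2 → ℝ)).symm ![2 / N, -1] : EuclideanSpace ℝ (Fin 2)) ∈
        proxCone B (b n) := by
      refine ⟨N ^ 2, (WithLp.equiv 2 (Fin 2 → ℝ)).symm ![1 / N + 2 / N ^ 3, 0],
        by positivity, ?_, ?_⟩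
      · have hdyb : dist ((WithLp.equiv 2 (Fin 2 → ℝ)).symm ![1 / N + 2 / N ^ 3, 0] :
            EuclideanSpace ℝ (Fin 2)) (b n) = Real.sqrt (4 / N ^ 6 + 1 / N ^ 4) := by
          rw [hb, e_dist, e_apply0, e_apply0, e_apply1, e_apply1]
          congr 1
          field_simp
          ring
        rw [hdyb]
        refine le_antisymm ?_ ?_
        · refine le_infDist_aux ⟨b n, hbB⟩ ?_
          intro p hp
          rw [hB] at hp
          rw [e_dist, e_apply0, e_apply1]
          apply Real.sqrt_le_sqrt
          have hkey := parabola_ineq (1 / N) (p 0) (p 1) hp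
          have h2 : 2 / N ^ 3 = 2 * (1 / N) ^ 3 := by field_simp
          have h4 : 4 / N ^ 6 + 1 / N ^ 4 = 4 * (1 / N) ^ 6 + (1 / N) ^ 4 := by field_simp
          rw [h4]
          calc 4 * (1 / N) ^ 6 + (1 / N) ^ 4
              ≤ (p 0 - (1 / N + 2 * (1 / N) ^ 3)) ^ 2 + (p 1) ^ 2 := hkey
            _ = (1 / N + 2 / N ^ 3 - p 0) ^ 2 + (0 - p 1) ^ 2 := by rw [h2]; ring
        · calc Metric.infDist _ B ≤ _ := Metric.infDist_le_dist_of_mem hbB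
            _ = Real.sqrt (4 / N ^ 6 + 1 / N ^ 4) := hdyb
      · rw [hb, e_sub, e_smul]
        refine e_eq _ _ _ _ ?_ ?_
        · field_simp; ring
        · field_simp; simp [hNdef]
    have hdB : Metric.infDist (‖a n - b n‖⁻¹ • (a n - b n)) (proxCone B (b n)) ≤ 2 / N := by
      rw [hv2]
      calc Metric.infDist _ _ ≤ dist ((WithLp.equiv 2 (Fin 2 → ℝ)).symm ![0, -1] :
          EuclideanSpace ℝ (Fin 2)) ((WithLp.equiv 2 (Fin 2 → ℝ)).symm ![2 / N, -1]) :=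
            Metric.infDist_le_dist_of_mem hmemB
        _ = 2 / N := by
            rw [e_dist, e_apply0, e_apply0, e_apply1, e_apply1]
            rw [show (0 - 2 / N) ^ 2 + (-1 - -1 : ℝ) ^ 2 = (2 / N) ^ 2 by ring]
            exact Real.sqrt_sq (by positivity)
    rw [hdA]
    exact max_le (by positivity) hdB
  refine ⟨key, ?_⟩
  rintro ⟨α, ⟨hα0, hα1⟩, h⟩
  obtain ⟨n, hn⟩ := exists_nat_gt (2 / α)
  have hnR : (0:ℝ) < (n:ℝ) := lt_trans (div_pos two_pos hα0) hn
  have hn1 : 1 ≤ n := by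
    have : 0 < n := by exact_mod_cast hnR
    omega
  have h1 := h n hn1
  have h2 := key n hn1
  have hlt : 2 / (n:ℝ) < α := by
    rw [div_lt_iff₀ hnR]
    rw [div_lt_iff₀ hα0] at hn
    linarith
  linarith
end
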